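/- arXiv:0803.3160 — 4 statements merged into one kernel-verified Lean document; each statement's English description precedes it below -/
import Mathlib

section
/- (Generalized Helmholtz–Kelvin theorem) Let V be a smooth velocity field with flow φ_t, and suppose d_c(V*) = grad*(½|V|² − g − Ω) + u grad* T for smooth scalar fields u, T, g, Ω. Let C₀ be a closed C¹ curve in D₀ and C_t = φ_t(C₀) the transported fluid curve, and assume C₀ lies on a level surface of T∘φ_t (equivalently, T is constant on C_t for each t, which holds if dT/dt = 0 and T is constant on C₀). Then the circulation I(t) = ∮_{C_t} V*·dx is constant in time. -/
open scoped BigOperators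

noncomputable section

/-- Points of physical space `ℝ³`. -/
abbrev V3 : Type := Fin 3 → ℝ

/-- Partial derivative of a scalar field in direction `i`. -/
def pd (i : Fin 3) (f : V3 → ℝ) (x : V3) : ℝ := fderiv ℝ f x (Pi.single i 1)

/-- Gradient of a scalar field on `ℝ³`. -/
def grad3 (f : V3 → ℝ) (x : V3) : V3 := fun i => pd i f x

/-- Cross product on `ℝ³`. -/
def cross (a b : V3) : V3 :=
  ![a 1 * b 2 - a 2 * b 1, a 2 * b 0 - a 0 * b 2, a 0 * b 1 - a 1 * b 0]

/-- Euclidean scalar product on `ℝ³`. -/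
def dot3 (a b : V3) : ℝ := ∑ i, a i * b i

/-- Curl of a vector field on `ℝ³`. -/
def curl3 (V : V3 → V3) (x : V3) : V3 :=
  ![pd 1 (fun y => V y 2) x - pd 2 (fun y => V y 1) x,
    pd 2 (fun y => V y 0) x - pd 0 (fun y => V y 2) x,
    pd 0 (fun y => V y 1) x - pd 1 (fun y => V y 0) x]

/-- Divergence of a vector field on `ℝ³`. -/
def div3 (V : V3 → V3) (x : V3) : ℝ := ∑ i, pd i (fun y => V y i) x

/-- Material derivative `∂f/∂t + (grad f)·V` of a time-dependent scalar field. -/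
def matD (Vel : ℝ → V3 → V3) (f : ℝ → V3 → ℝ) (t : ℝ) (x : V3) : ℝ :=
  deriv (fun τ => f τ x) t + dot3 (grad3 (f t) x) (Vel t x)

/-- Row covector times spatial Jacobian of the velocity: `(L ∂V/∂x)ⱼ = ∑ᵢ Lᵢ ∂Vᵢ/∂xⱼ`. -/
def rowJac (Vel : ℝ → V3 → V3) (L : V3) (t : ℝ) (x : V3) : V3 :=
  fun j => ∑ i, L i * pd j (fun y => Vel t y i) x

/-- Spatial Jacobian of the velocity applied to a column vector. -/
def jacApply (Vel : ℝ → V3 → V3) (t : ℝ) (x : V3) (w : V3) : V3 :=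
  fun i => ∑ j, pd j (fun y => Vel t y i) x * w j

/-- Material derivative of a time-dependent (co)vector field, componentwise. -/
def matDvec (Vel : ℝ → V3 → V3) (L : ℝ → V3 → V3) (t : ℝ) (x : V3) : V3 :=
  fun j => matD Vel (fun τ y => L τ y j) t x

/-- Convective (Lie) derivative of a covector field: `d_c L = dL/dt + L (∂V/∂x)`. -/
def convD (Vel : ℝ → V3 → V3) (L : ℝ → V3 → V3) (t : ℝ) (x : V3) : V3 :=
  matDvec Vel L t x + rowJac Vel (L t x) t x

/-- Acceleration `Γ = ∂V/∂t + (∂V/∂x) V` of a velocity field. -/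
def accel (Vel : ℝ → V3 → V3) (t : ℝ) (x : V3) : V3 :=
  (fun i => deriv (fun τ => Vel τ x i) t) + jacApply Vel t x (Vel t x)

/-- Smoothness of a time-dependent scalar field on space-time. -/
def SmoothT (f : ℝ → V3 → ℝ) : Prop := ContDiff ℝ (⊤ : ℕ∞) fun p : ℝ × V3 => f p.1 p.2

/-- Smoothness of a time-dependent vector field on space-time. -/
def SmoothTV (f : ℝ → V3 → V3) : Prop := ContDiff ℝ (⊤ : ℕ∞) fun p : ℝ × V3 => f p.1 p.2

lemma hk_sum_single (w : V3) : ∑ j, w j • (Pi.single j 1 : V3) = w := by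
  funext i
  simp [Finset.sum_apply, Pi.single_apply]

lemma clm_eq_sum (ℓ : V3 →L[ℝ] ℝ) (w : V3) : ℓ w = ∑ j, ℓ (Pi.single j 1) * w j := by
  conv_lhs => rw [← hk_sum_single w]
  rw [map_sum]
  simp [mul_comm]

lemma dot3_grad (f : V3 → ℝ) (x w : V3) : dot3 (grad3 f x) w = fderiv ℝ f x w := by
  simp only [dot3, grad3, pd]
  exact (clm_eq_sum _ w).symm

lemma dot3_add_left (a b w : V3) : dot3 (a + b) w = dot3 a w + dot3 b w := by
  simp [dot3, add_mul, Finset.sum_add_distrib]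

lemma dot3_smul_left (r : ℝ) (a w : V3) : dot3 (r • a) w = r * dot3 a w := by
  simp [dot3, Finset.mul_sum, mul_assoc]

lemma hasDerivAt_partial_fst {E : Type*} [NormedAddCommGroup E] [NormedSpace ℝ E]
    {F : ℝ × V3 → E} (hF : Differentiable ℝ F) (t : ℝ) (x : V3) :
    HasDerivAt (fun s => F (s, x)) (fderiv ℝ F (t, x) (1, 0)) t :=
  (hF (t, x)).hasFDerivAt.comp_hasDerivAt t ((hasDerivAt_id t).prodMk (hasDerivAt_const t x))

lemma hasFDerivAt_partial_snd {E : Type*} [NormedAddCommGroup E] [NormedSpace ℝ E]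
    {F : ℝ × V3 → E} (hF : Differentiable ℝ F) (t : ℝ) (x : V3) :
    HasFDerivAt (fun y => F (t, y))
      ((fderiv ℝ F (t, x)).comp (ContinuousLinearMap.inr ℝ ℝ V3)) x := by
  have h := (hF (t, x)).hasFDerivAt.comp x ((hasFDerivAt_const t x).prodMk (hasFDerivAt_id x))
  exact h

/-- tangent vector of the transported curve -/

def wfun (φ : ℝ → V3 → V3) (c : ℝ → V3) (t τ : ℝ) : V3 :=
  fderiv ℝ (fun p : ℝ × V3 => φ p.1 p.2) (t, c τ) (0, deriv c τ)

lemma hw_lem {φ : ℝ → V3 → V3} {c : ℝ → V3} (hφ : SmoothTV φ) (hc : ContDiff ℝ 1 c)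
    (t τ : ℝ) : HasDerivAt (fun σ => φ t (c σ)) (wfun φ c t τ) τ := by
  have hΦd : Differentiable ℝ (fun p : ℝ × V3 => φ p.1 p.2) := hφ.differentiable (by simp)
  have hc' : HasDerivAt c (deriv c τ) τ := (hc.differentiable one_ne_zero τ).hasDerivAt
  exact (hΦd (t, c τ)).hasFDerivAt.comp_hasDerivAt τ ((hasDerivAt_const τ t).prodMk hc')

lemma w_cont {φ : ℝ → V3 → V3} {c : ℝ → V3} (hφ : SmoothTV φ) (hc : ContDiff ℝ 1 c) :
    Continuous fun p : ℝ × ℝ => wfun φ c p.1 p.2 := by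
  have h1 : Continuous (fderiv ℝ (fun p : ℝ × V3 => φ p.1 p.2)) :=
    hφ.continuous_fderiv (by simp)
  have h2 : Continuous fun p : ℝ × ℝ =>
      fderiv ℝ (fun p : ℝ × V3 => φ p.1 p.2) (p.1, c p.2) :=
    h1.comp (continuous_fst.prodMk (hc.continuous.comp continuous_snd))
  have h3 : Continuous fun p : ℝ × ℝ => ((0 : ℝ), deriv c p.2) :=
    continuous_const.prodMk ((hc.continuous_deriv le_rfl).comp continuous_snd)
  exact h2.clm_apply h3

def Hfun (Vel φ : ℝ → V3 → V3) (c : ℝ → V3) (t τ : ℝ) : ℝ :=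
  (∑ i, fderiv ℝ (fun p : ℝ × V3 => Vel p.1 p.2 i) (t, φ t (c τ))
      ((1 : ℝ), Vel t (φ t (c τ))) * wfun φ c t τ i)
  + ∑ i, Vel t (φ t (c τ)) i *
      fderiv ℝ (fun p : ℝ × V3 => Vel p.1 p.2 i) (t, φ t (c τ)) ((0 : ℝ), wfun φ c t τ)

lemma H_cont {Vel φ : ℝ → V3 → V3} {c : ℝ → V3}
    (hV : SmoothTV Vel) (hφ : SmoothTV φ) (hc : ContDiff ℝ 1 c) :
    Continuous fun p : ℝ × ℝ => Hfun Vel φ c p.1 p.2 := by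
  have cγ : Continuous fun p : ℝ × ℝ => φ p.1 (c p.2) :=
    hφ.continuous.comp (continuous_fst.prodMk (hc.continuous.comp continuous_snd))
  have cpair : Continuous fun p : ℝ × ℝ => ((p.1 : ℝ), φ p.1 (c p.2)) :=
    continuous_fst.prodMk cγ
  have cVelγ : Continuous fun p : ℝ × ℝ => Vel p.1 (φ p.1 (c p.2)) :=
    hV.continuous.comp cpair
  have cw : Continuous fun p : ℝ × ℝ => wfun φ c p.1 p.2 := w_cont hφ hc
  have cfd : ∀ i : Fin 3, Continuous fun p : ℝ × ℝ =>
      fderiv ℝ (fun q : ℝ × V3 => Vel q.1 q.2 i) (p.1, φ p.1 (c p.2)) := fun i =>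
    ((contDiff_pi.mp hV i).continuous_fderiv (by simp)).comp cpair
  apply Continuous.add
  · apply continuous_finset_sum
    intro i _
    exact ((cfd i).clm_apply (continuous_const.prodMk cVelγ)).mul
      ((continuous_apply i).comp cw)
  · apply continuous_finset_sum
    intro i _
    exact ((continuous_apply i).comp cVelγ).mul
      ((cfd i).clm_apply (continuous_const.prodMk cw))

lemma hasDerivAt_h {Vel φ : ℝ → V3 → V3} {c : ℝ → V3}
    (hV : SmoothTV Vel) (hφ : SmoothTV φ) (hc : ContDiff ℝ 1 c)
    (hflow : ∀ (t : ℝ) (X : V3), deriv (fun τ => φ τ X) t = Vel t (φ t X)) (t τ : ℝ) :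
    HasDerivAt (fun s => dot3 (Vel s (φ s (c τ))) (wfun φ c s τ)) (Hfun Vel φ c t τ) t := by
  have hΦ : ContDiff ℝ (⊤ : ℕ∞) (fun p : ℝ × V3 => φ p.1 p.2) := hφ
  have hΦd : Differentiable ℝ (fun p : ℝ × V3 => φ p.1 p.2) := hΦ.differentiable (by simp)
  have hVd : Differentiable ℝ (fun p : ℝ × V3 => Vel p.1 p.2) :=
    (hV : ContDiff ℝ (⊤ : ℕ∞) _).differentiable (by simp)
  -- flow identity in fderiv form
  have hflow' : ∀ p : ℝ × V3,
      fderiv ℝ (fun p : ℝ × V3 => φ p.1 p.2) p (1, 0) = Vel p.1 (φ p.1 p.2) := by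
    intro p
    have h1 := hasDerivAt_partial_fst hΦd p.1 p.2
    rw [← h1.deriv]
    exact congrArg _ rfl |>.trans (hflow p.1 p.2)
  have hφt : ∀ (s : ℝ) (X : V3), HasDerivAt (fun s' => φ s' X) (Vel s (φ s X)) s := by
    intro s X
    have h1 := hasDerivAt_partial_fst hΦd s X
    rwa [hflow' (s, X)] at h1
  -- second derivative of Φ
  have hfd : ContDiff ℝ 1 (fderiv ℝ (fun p : ℝ × V3 => φ p.1 p.2)) :=
    hΦ.fderiv_right (WithTop.coe_le_coe.mpr le_top)
  have hD2 : HasFDerivAt (fderiv ℝ (fun p : ℝ × V3 => φ p.1 p.2))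
      (fderiv ℝ (fderiv ℝ (fun p : ℝ × V3 => φ p.1 p.2)) (t, c τ)) (t, c τ) :=
    ((hfd.differentiable one_ne_zero) _).hasFDerivAt
  have hsymm := (hΦ.contDiffAt (x := ((t : ℝ), c τ))).isSymmSndFDerivAt (by rw [minSmoothness_of_isRCLikeNormedField]; exact WithTop.coe_le_coe.mpr le_top)
  -- s-derivative of the parametrized fderiv applied to a fixed vector
  have happ : ∀ v : ℝ × V3,
      HasDerivAt (fun s => fderiv ℝ (fun p : ℝ × V3 => φ p.1 p.2) (s, c τ) v)
        (fderiv ℝ (fderiv ℝ (fun p : ℝ × V3 => φ p.1 p.2)) (t, c τ) (1, 0) v) t := by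
    intro v
    have h1 : HasDerivAt (fun s => fderiv ℝ (fun p : ℝ × V3 => φ p.1 p.2) (s, c τ))
        (fderiv ℝ (fderiv ℝ (fun p : ℝ × V3 => φ p.1 p.2)) (t, c τ) (1, 0)) t :=
      hD2.comp_hasDerivAt t ((hasDerivAt_id t).prodMk (hasDerivAt_const t (c τ)))
    exact (ContinuousLinearMap.apply ℝ V3 v).hasFDerivAt.comp_hasDerivAt t h1
  -- mixed partials identity
  have hmix : fderiv ℝ (fderiv ℝ (fun p : ℝ × V3 => φ p.1 p.2)) (t, c τ)
        ((1 : ℝ), (0 : V3)) ((0 : ℝ), deriv c τ)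
      = fderiv ℝ (fun p : ℝ × V3 => Vel p.1 p.2) (t, φ t (c τ)) (0, wfun φ c t τ) := by
    rw [hsymm]
    have h2 : HasFDerivAt (fun p : ℝ × V3 => fderiv ℝ (fun q : ℝ × V3 => φ q.1 q.2) p (1, 0))
        ((ContinuousLinearMap.apply ℝ V3 ((1 : ℝ), (0 : V3))).comp
          (fderiv ℝ (fderiv ℝ (fun p : ℝ × V3 => φ p.1 p.2)) (t, c τ))) (t, c τ) :=
      (ContinuousLinearMap.apply ℝ V3 ((1 : ℝ), (0 : V3))).hasFDerivAt.comp _ hD2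
    have h3 : HasFDerivAt (fun p : ℝ × V3 => Vel p.1 (φ p.1 p.2))
        ((ContinuousLinearMap.apply ℝ V3 ((1 : ℝ), (0 : V3))).comp
          (fderiv ℝ (fderiv ℝ (fun p : ℝ × V3 => φ p.1 p.2)) (t, c τ))) (t, c τ) :=
      h2.congr_of_eventuallyEq (Filter.Eventually.of_forall fun p => (hflow' p).symm)
    have h4 : HasFDerivAt (fun p : ℝ × V3 => Vel p.1 (φ p.1 p.2))
        ((fderiv ℝ (fun p : ℝ × V3 => Vel p.1 p.2) ((t : ℝ), φ t (c τ))).comp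
          ((ContinuousLinearMap.fst ℝ ℝ V3).prod
            (fderiv ℝ (fun p : ℝ × V3 => φ p.1 p.2) (t, c τ)))) (t, c τ) :=
      (hVd ((t : ℝ), φ t (c τ))).hasFDerivAt.comp (f := fun p : ℝ × V3 => (p.1, φ p.1 p.2)) (t, c τ)
        (hasFDerivAt_fst.prodMk (hΦd (t, c τ)).hasFDerivAt)
    have h5 := h3.unique h4
    calc fderiv ℝ (fderiv ℝ (fun p : ℝ × V3 => φ p.1 p.2)) (t, c τ)
          ((0 : ℝ), deriv c τ) ((1 : ℝ), (0 : V3))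
        = ((ContinuousLinearMap.apply ℝ V3 ((1 : ℝ), (0 : V3))).comp
            (fderiv ℝ (fderiv ℝ (fun p : ℝ × V3 => φ p.1 p.2)) (t, c τ)))
            ((0 : ℝ), deriv c τ) := rfl
      _ = ((fderiv ℝ (fun p : ℝ × V3 => Vel p.1 p.2) ((t : ℝ), φ t (c τ))).comp
            ((ContinuousLinearMap.fst ℝ ℝ V3).prod
              (fderiv ℝ (fun p : ℝ × V3 => φ p.1 p.2) (t, c τ))))
            ((0 : ℝ), deriv c τ) := by rw [h5]
      _ = fderiv ℝ (fun p : ℝ × V3 => Vel p.1 p.2) (t, φ t (c τ)) (0, wfun φ c t τ) := rfl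
  -- time derivative of the tangent vector
  have hwt : HasDerivAt (fun s => wfun φ c s τ)
      (fderiv ℝ (fun p : ℝ × V3 => Vel p.1 p.2) (t, φ t (c τ)) (0, wfun φ c t τ)) t := by
    have h := happ ((0 : ℝ), deriv c τ)
    rwa [hmix] at h
  have hwti : ∀ i : Fin 3, HasDerivAt (fun s => wfun φ c s τ i)
      (fderiv ℝ (fun p : ℝ × V3 => Vel p.1 p.2) (t, φ t (c τ)) (0, wfun φ c t τ) i) t :=
    fun i => (ContinuousLinearMap.proj (R := ℝ) (φ := fun _ : Fin 3 => ℝ) i).hasFDerivAt.comp_hasDerivAt t hwt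
  -- time derivative of the velocity along the flow, componentwise
  have hVi : ∀ i : Fin 3, HasDerivAt (fun s => Vel s (φ s (c τ)) i)
      (fderiv ℝ (fun p : ℝ × V3 => Vel p.1 p.2 i) (t, φ t (c τ))
        ((1 : ℝ), Vel t (φ t (c τ)))) t := by
    intro i
    have hcurve : HasDerivAt (fun s => ((s : ℝ), φ s (c τ))) ((1 : ℝ), Vel t (φ t (c τ))) t :=
      (hasDerivAt_id t).prodMk (hφt t (c τ))
    have hVid : Differentiable ℝ (fun p : ℝ × V3 => Vel p.1 p.2 i) :=
      (contDiff_pi.mp hV i).differentiable (by simp)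
    exact (hVid _).hasFDerivAt.comp_hasDerivAt t hcurve
  -- assemble
  have hsum : HasDerivAt (fun s => ∑ i, Vel s (φ s (c τ)) i * wfun φ c s τ i)
      (∑ i, (fderiv ℝ (fun p : ℝ × V3 => Vel p.1 p.2 i) (t, φ t (c τ))
          ((1 : ℝ), Vel t (φ t (c τ))) * wfun φ c t τ i
        + Vel t (φ t (c τ)) i *
            fderiv ℝ (fun p : ℝ × V3 => Vel p.1 p.2 i) (t, φ t (c τ))
              ((0 : ℝ), wfun φ c t τ))) t := by
    apply HasDerivAt.fun_sum
    intro i _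
    have hcomp : fderiv ℝ (fun p : ℝ × V3 => Vel p.1 p.2) (t, φ t (c τ)) (0, wfun φ c t τ) i
        = fderiv ℝ (fun p : ℝ × V3 => Vel p.1 p.2 i) (t, φ t (c τ)) ((0 : ℝ), wfun φ c t τ) := by
      have h6 := ((ContinuousLinearMap.proj (R := ℝ) (φ := fun _ : Fin 3 => ℝ) i).hasFDerivAt.comp
        ((t : ℝ), φ t (c τ)) (hVd _).hasFDerivAt).fderiv
      have h7 : (fun p : ℝ × V3 => Vel p.1 p.2 i)
          = (⇑(ContinuousLinearMap.proj (R := ℝ) (φ := fun _ : Fin 3 => ℝ) i) ∘ fun p : ℝ × V3 => Vel p.1 p.2) := rfl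
      rw [h7, h6]
      rfl
    exact (hVi i).mul (hcomp ▸ hwti i)
  have hval : (∑ i, (fderiv ℝ (fun p : ℝ × V3 => Vel p.1 p.2 i) (t, φ t (c τ))
          ((1 : ℝ), Vel t (φ t (c τ))) * wfun φ c t τ i
        + Vel t (φ t (c τ)) i *
            fderiv ℝ (fun p : ℝ × V3 => Vel p.1 p.2 i) (t, φ t (c τ))
              ((0 : ℝ), wfun φ c t τ))) = Hfun Vel φ c t τ := by
    rw [Finset.sum_add_distrib]; rfl
  exact hval ▸ hsum

lemma H_eq_convD {Vel φ : ℝ → V3 → V3} {c : ℝ → V3}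
    (hV : SmoothTV Vel) (t τ : ℝ) :
    Hfun Vel φ c t τ = dot3 (convD Vel Vel t (φ t (c τ))) (wfun φ c t τ) := by
  have hVid : ∀ i, Differentiable ℝ (fun p : ℝ × V3 => Vel p.1 p.2 i) :=
    fun i => (contDiff_pi.mp hV i).differentiable (by simp)
  have hpart : ∀ (i : Fin 3) (v : V3),
      fderiv ℝ (fun p : ℝ × V3 => Vel p.1 p.2 i) (t, φ t (c τ)) ((0 : ℝ), v)
        = fderiv ℝ (fun y => Vel t y i) (φ t (c τ)) v := by
    intro i v
    rw [(hasFDerivAt_partial_snd (hVid i) t (φ t (c τ))).fderiv]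
    rfl
  rw [convD, dot3_add_left]
  unfold Hfun
  congr 1
  · simp only [dot3, matDvec, matD]
    apply Finset.sum_congr rfl
    intro i _
    congr 1
    have hsplit : ((1 : ℝ), Vel t (φ t (c τ))) = ((1 : ℝ), (0 : V3)) + ((0 : ℝ), Vel t (φ t (c τ))) := by
      simp
    rw [hsplit, map_add]
    congr 1
    · exact ((hasDerivAt_partial_fst (hVid i) t (φ t (c τ))).deriv).symm
    · rw [hpart]
      simp only [grad3, pd]
      exact clm_eq_sum _ _
  · simp only [dot3, rowJac]
    have hval : ∀ i : Fin 3,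
        fderiv ℝ (fun p : ℝ × V3 => Vel p.1 p.2 i) (t, φ t (c τ)) ((0 : ℝ), wfun φ c t τ)
          = ∑ j, pd j (fun y => Vel t y i) (φ t (c τ)) * wfun φ c t τ j := by
      intro i
      rw [hpart]
      simp only [pd]
      exact clm_eq_sum _ _
    simp only [hval, Finset.mul_sum, Finset.sum_mul, mul_assoc]
    rw [Finset.sum_comm]

lemma integral_H_zero {Vel φ : ℝ → V3 → V3} {u T g Ω : ℝ → V3 → ℝ} {c : ℝ → V3}
    (hV : SmoothTV Vel) (hφ : SmoothTV φ) (hT : SmoothT T) (hg : SmoothT g) (hΩ : SmoothT Ω)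
    (hc : ContDiff ℝ 1 c) (hclosed : c 1 = c 0)
    (hmot : ∀ (t : ℝ) (x : V3), convD Vel Vel t x
        = grad3 (fun y => (1 / 2) * dot3 (Vel t y) (Vel t y) - g t y - Ω t y) x
          + u t x • grad3 (T t) x)
    (hlevel : ∀ (t τ : ℝ), T t (φ t (c τ)) = T t (φ t (c 0))) (t : ℝ) :
    (∫ τ in (0:ℝ)..1, Hfun Vel φ c t τ) = 0 := by
  have hF : ContDiff ℝ (⊤ : ℕ∞) (fun p : ℝ × V3 =>
      (1 / 2) * dot3 (Vel p.1 p.2) (Vel p.1 p.2) - g p.1 p.2 - Ω p.1 p.2) := by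
    apply ContDiff.sub _ hΩ
    apply ContDiff.sub _ hg
    apply ContDiff.mul contDiff_const
    simp only [dot3]
    exact ContDiff.sum fun i _ => (contDiff_pi.mp hV i).mul (contDiff_pi.mp hV i)
  have hFd : Differentiable ℝ (fun p : ℝ × V3 =>
      (1 / 2) * dot3 (Vel p.1 p.2) (Vel p.1 p.2) - g p.1 p.2 - Ω p.1 p.2) :=
    hF.differentiable (by simp)
  have hTd : Differentiable ℝ (fun p : ℝ × V3 => T p.1 p.2) :=
    (hT : ContDiff ℝ (⊤ : ℕ∞) _).differentiable (by simp)
  have hkey : ∀ τ : ℝ, Hfun Vel φ c t τ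
      = fderiv ℝ (fun y => (1 / 2) * dot3 (Vel t y) (Vel t y) - g t y - Ω t y)
          (φ t (c τ)) (wfun φ c t τ) := by
    intro τ
    rw [H_eq_convD hV, hmot, dot3_add_left, dot3_smul_left, dot3_grad, dot3_grad]
    have hTt : DifferentiableAt ℝ (T t) (φ t (c τ)) :=
      (hasFDerivAt_partial_snd hTd t (φ t (c τ))).differentiableAt
    have h1 : HasDerivAt (fun σ => T t (φ t (c σ)))
        (fderiv ℝ (T t) (φ t (c τ)) (wfun φ c t τ)) τ :=
      hTt.hasFDerivAt.comp_hasDerivAt τ (hw_lem hφ hc t τ)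
    have h2 : HasDerivAt (fun σ => T t (φ t (c σ))) 0 τ := by
      have he : (fun σ => T t (φ t (c σ))) = fun _ => T t (φ t (c 0)) :=
        funext fun σ => hlevel t σ
      rw [he]
      exact hasDerivAt_const τ _
    have hz : fderiv ℝ (T t) (φ t (c τ)) (wfun φ c t τ) = 0 := h1.unique h2
    rw [hz, mul_zero, add_zero]
  have hderiv : ∀ σ ∈ Set.uIcc (0 : ℝ) 1,
      HasDerivAt (fun σ' => (1 / 2) * dot3 (Vel t (φ t (c σ'))) (Vel t (φ t (c σ')))
        - g t (φ t (c σ')) - Ω t (φ t (c σ'))) (Hfun Vel φ c t σ) σ := by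
    intro σ _
    have hFtd : DifferentiableAt ℝ
        (fun y => (1 / 2) * dot3 (Vel t y) (Vel t y) - g t y - Ω t y) (φ t (c σ)) :=
      (hasFDerivAt_partial_snd hFd t (φ t (c σ))).differentiableAt
    have h3 := hFtd.hasFDerivAt.comp_hasDerivAt σ (hw_lem hφ hc t σ)
    rwa [← hkey σ] at h3
  have hcont1 : Continuous fun σ : ℝ => Hfun Vel φ c t σ := by
    exact (H_cont hV hφ hc).comp (continuous_const.prodMk continuous_id)
  have hint : IntervalIntegrable (fun σ => Hfun Vel φ c t σ) MeasureTheory.volume 0 1 :=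
    hcont1.intervalIntegrable 0 1
  rw [intervalIntegral.integral_eq_sub_of_hasDerivAt hderiv hint, hclosed, sub_self]

/-- Generalized Helmholtz–Kelvin theorem: if
`d_c(V*) = grad*(½|V|² − g − Ω) + u grad* T` and the transported closed fluid curve
stays on a level surface of `T`, then the circulation of `V` along it is constant. -/
theorem stmt_7 (Vel : ℝ → V3 → V3) (φ : ℝ → V3 → V3) (u T g Ω : ℝ → V3 → ℝ)
    (hV : SmoothTV Vel) (hφ : SmoothTV φ)
    (hu : SmoothT u) (hT : SmoothT T) (hg : SmoothT g) (hΩ : SmoothT Ω)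
    (hdiffeo : ∀ t : ℝ, Function.Bijective (φ t))
    (hflow : ∀ (t : ℝ) (X : V3), deriv (fun τ => φ τ X) t = Vel t (φ t X))
    (hmot : ∀ (t : ℝ) (x : V3),
      convD Vel Vel t x
        = grad3 (fun y => (1 / 2) * dot3 (Vel t y) (Vel t y) - g t y - Ω t y) x
          + u t x • grad3 (T t) x)
    (c : ℝ → V3) (hc : ContDiff ℝ 1 c) (hclosed : c 1 = c 0)
    (hlevel : ∀ (t : ℝ) (τ : ℝ), T t (φ t (c τ)) = T t (φ t (c 0))) :
    ∀ t₁ t₂ : ℝ,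
      (∫ τ in (0:ℝ)..1, dot3 (Vel t₁ (φ t₁ (c τ))) (deriv (fun σ => φ t₁ (c σ)) τ))
        = ∫ τ in (0:ℝ)..1, dot3 (Vel t₂ (φ t₂ (c τ))) (deriv (fun σ => φ t₂ (c σ)) τ) := by
  intro t₁ t₂
  have hde : ∀ t τ : ℝ, deriv (fun σ => φ t (c σ)) τ = wfun φ c t τ :=
    fun t τ => (hw_lem hφ hc t τ).deriv
  have hIrw : ∀ t : ℝ,
      (∫ τ in (0:ℝ)..1, dot3 (Vel t (φ t (c τ))) (deriv (fun σ => φ t (c σ)) τ))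
        = ∫ τ in (0:ℝ)..1, dot3 (Vel t (φ t (c τ))) (wfun φ c t τ) := by
    intro t
    simp only [hde]
  rw [hIrw t₁, hIrw t₂]
  have hIderiv : ∀ t₀ : ℝ, HasDerivAt
      (fun t => ∫ τ in (0:ℝ)..1, dot3 (Vel t (φ t (c τ))) (wfun φ c t τ)) 0 t₀ := by
    intro t₀
    have hHc : Continuous fun p : ℝ × ℝ => Hfun Vel φ c p.1 p.2 := H_cont hV hφ hc
    have hhc : Continuous fun p : ℝ × ℝ =>
        dot3 (Vel p.1 (φ p.1 (c p.2))) (wfun φ c p.1 p.2) := by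
      simp only [dot3]
      apply continuous_finset_sum
      intro i _
      have cγ : Continuous fun p : ℝ × ℝ => φ p.1 (c p.2) :=
        hφ.continuous.comp (continuous_fst.prodMk (hc.continuous.comp continuous_snd))
      exact ((continuous_apply i).comp (hV.continuous.comp (continuous_fst.prodMk cγ))).mul
        ((continuous_apply i).comp (w_cont hφ hc))
    obtain ⟨M, hM⟩ := ((isCompact_Icc (a := t₀ - 1) (b := t₀ + 1)).prod
      (isCompact_Icc (a := (0:ℝ)) (b := 1))).exists_bound_of_continuousOn hHc.continuousOn
    have main := intervalIntegral.hasDerivAt_integral_of_dominated_loc_of_deriv_le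
      (F := fun t τ => dot3 (Vel t (φ t (c τ))) (wfun φ c t τ))
      (F' := fun t τ => Hfun Vel φ c t τ) (a := 0) (b := 1) (μ := MeasureTheory.volume)
      (x₀ := t₀) (bound := fun _ => M) (s := Metric.ball t₀ 1) (Metric.ball_mem_nhds t₀ one_pos)
      (Filter.Eventually.of_forall fun t =>
        (Continuous.aestronglyMeasurable
          (by exact hhc.comp (continuous_const.prodMk continuous_id))))
      (by exact (hhc.comp (continuous_const.prodMk continuous_id)).intervalIntegrable 0 1)
      (Continuous.aestronglyMeasurable
        (by exact hHc.comp (continuous_const.prodMk continuous_id)))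
      (Filter.Eventually.of_forall (fun τ hτ x hx => by
        have hx' : x ∈ Set.Icc (t₀ - 1) (t₀ + 1) := by
          rw [Metric.mem_ball, Real.dist_eq] at hx
          have := abs_lt.mp hx
          constructor <;> linarith [this.1, this.2]
        have hτ' : τ ∈ Set.Icc (0:ℝ) 1 := by
          rw [Set.uIoc_of_le (by norm_num : (0:ℝ) ≤ 1)] at hτ
          exact ⟨hτ.1.le, hτ.2⟩
        exact hM (x, τ) (Set.mk_mem_prod hx' hτ')))
      intervalIntegrable_const
      (Filter.Eventually.of_forall (fun τ _ x _ => hasDerivAt_h hV hφ hc hflow x τ))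
    have hzero := integral_H_zero hV hφ hT hg hΩ hc hclosed hmot hlevel t₀
    have h7 := main.2
    rwa [hzero] at h7
  exact is_const_of_deriv_eq_zero (fun s => (hIderiv s).differentiableAt)
    (fun s => (hIderiv s).deriv) t₁ t₂
end
end

section
/- Let V be a smooth velocity field and C a smooth time-dependent covector field with zero convective derivative: dC*/dt + C*(∂V/∂x) = 0, where d/dt is the material derivative. Let ρ be a smooth positive density satisfying dρ/dt + ρ div V = 0. Then the vector field U = (1/ρ) rot C is convected by the flow: dU/dt − (∂V/∂x)U = 0. -/
open scoped BigOperators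

noncomputable section

def eT : ℝ × V3 := ((1:ℝ), (0:V3))
def eS (j : Fin 3) : ℝ × V3 := ((0:ℝ), Pi.single j 1)

lemma slice_deriv {F : ℝ × V3 → ℝ} {t : ℝ} {x : V3} (hF : DifferentiableAt ℝ F (t, x)) :
    deriv (fun τ => F (τ, x)) t = fderiv ℝ F (t, x) eT := by
  have h1 : HasDerivAt (fun τ : ℝ => ((τ : ℝ), x)) eT t := by
    simpa [eT] using ((hasDerivAt_id t).prodMk (hasDerivAt_const t x))
  exact (hF.hasFDerivAt.comp_hasDerivAt t h1).deriv

lemma slice_pd {F : ℝ × V3 → ℝ} {t : ℝ} {x : V3} (hF : DifferentiableAt ℝ F (t, x)) (j : Fin 3) :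
    fderiv ℝ (fun y => F (t, y)) x (Pi.single j 1) = fderiv ℝ F (t, x) (eS j) := by
  have h1 : HasFDerivAt (fun y : V3 => ((t : ℝ), y))
      ((0 : V3 →L[ℝ] ℝ).prod (ContinuousLinearMap.id ℝ V3)) x :=
    (hasFDerivAt_const t x).prodMk (hasFDerivAt_id x)
  have h3 : fderiv ℝ (fun y => F (t, y)) x
      = (fderiv ℝ F (t, x)).comp ((0 : V3 →L[ℝ] ℝ).prod (ContinuousLinearMap.id ℝ V3)) :=
    (hF.hasFDerivAt.comp x h1).fderiv
  rw [h3]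
  simp [eS]

lemma hasFDerivAt_Dapply {F : ℝ × V3 → ℝ} (hF : ContDiff ℝ (⊤ : ℕ∞) F) (p v : ℝ × V3) :
    HasFDerivAt (fun q => fderiv ℝ F q v)
      ((ContinuousLinearMap.apply ℝ ℝ v).comp (fderiv ℝ (fderiv ℝ F) p)) p := by
  have h1 : HasFDerivAt (fderiv ℝ F) (fderiv ℝ (fderiv ℝ F) p) p :=
    (((hF.fderiv_right (m := (⊤ : ℕ∞)) (by simp)).differentiable (by simp)) p).hasFDerivAt
  exact (ContinuousLinearMap.apply ℝ ℝ v).hasFDerivAt.comp p h1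

lemma sderiv_comm {F : ℝ × V3 → ℝ} (hF : ContDiff ℝ (⊤ : ℕ∞) F) (p u v : ℝ × V3) :
    fderiv ℝ (fderiv ℝ F) p u v = fderiv ℝ (fderiv ℝ F) p v u :=
  ((hF.contDiffAt (x := p)).isSymmSndFDerivAt (by rw [minSmoothness_of_isRCLikeNormedField]; exact WithTop.coe_le_coe.mpr le_top)) u v

lemma hasFDerivAt_inv_comp {F : ℝ × V3 → ℝ} {f' : ℝ × V3 →L[ℝ] ℝ} {p : ℝ × V3}
    (hf : HasFDerivAt F f' p) (h0 : F p ≠ 0) :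
    HasFDerivAt (fun q => (F q)⁻¹) ((-((F p)^2)⁻¹) • f') p := by
  have h1 := (hasFDerivAt_inv h0).comp p hf
  have h2 : (ContinuousLinearMap.toSpanSingleton ℝ (-(F p ^ 2)⁻¹)).comp f'
      = (-((F p)^2)⁻¹) • f' := by
    ext v <;> simp [mul_comm]
  rw [h2] at h1
  exact h1

def comp3 (A : ℝ → V3 → V3) (i : Fin 3) : ℝ × V3 → ℝ := fun p => A p.1 p.2 i
def sc (ρ : ℝ → V3 → ℝ) : ℝ × V3 → ℝ := fun p => ρ p.1 p.2

lemma comp3_contDiff {A : ℝ → V3 → V3} (hA : ContDiff ℝ (⊤ : ℕ∞) fun p : ℝ × V3 => A p.1 p.2)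
    (i : Fin 3) : ContDiff ℝ (⊤ : ℕ∞) (comp3 A i) := (contDiff_pi.mp hA) i

def HbF (C Vel : ℝ → V3 → V3) (b : Fin 3) : ℝ × V3 → ℝ := fun p =>
  fderiv ℝ (comp3 C b) p eT
    + (fderiv ℝ (comp3 C b) p (eS 0) * comp3 Vel 0 p
      + fderiv ℝ (comp3 C b) p (eS 1) * comp3 Vel 1 p
      + fderiv ℝ (comp3 C b) p (eS 2) * comp3 Vel 2 p)
    + (comp3 C 0 p * fderiv ℝ (comp3 Vel 0) p (eS b)
      + comp3 C 1 p * fderiv ℝ (comp3 Vel 1) p (eS b)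
      + comp3 C 2 p * fderiv ℝ (comp3 Vel 2) p (eS b))

lemma diffH (C Vel : ℝ → V3 → V3)
    (hC : ContDiff ℝ (⊤ : ℕ∞) fun p : ℝ × V3 => C p.1 p.2)
    (hV : ContDiff ℝ (⊤ : ℕ∞) fun p : ℝ × V3 => Vel p.1 p.2)
    (b : Fin 3) (hH : ∀ p, HbF C Vel b p = 0) (p0 : ℝ × V3) (a : Fin 3) :
    fderiv ℝ (fderiv ℝ (comp3 C b)) p0 (eS a) eT
      + (fderiv ℝ (fderiv ℝ (comp3 C b)) p0 (eS a) (eS 0) * comp3 Vel 0 p0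
        + fderiv ℝ (fderiv ℝ (comp3 C b)) p0 (eS a) (eS 1) * comp3 Vel 1 p0
        + fderiv ℝ (fderiv ℝ (comp3 C b)) p0 (eS a) (eS 2) * comp3 Vel 2 p0)
      + (fderiv ℝ (comp3 C b) p0 (eS 0) * fderiv ℝ (comp3 Vel 0) p0 (eS a)
        + fderiv ℝ (comp3 C b) p0 (eS 1) * fderiv ℝ (comp3 Vel 1) p0 (eS a)
        + fderiv ℝ (comp3 C b) p0 (eS 2) * fderiv ℝ (comp3 Vel 2) p0 (eS a))
      + (fderiv ℝ (comp3 C 0) p0 (eS a) * fderiv ℝ (comp3 Vel 0) p0 (eS b)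
        + fderiv ℝ (comp3 C 1) p0 (eS a) * fderiv ℝ (comp3 Vel 1) p0 (eS b)
        + fderiv ℝ (comp3 C 2) p0 (eS a) * fderiv ℝ (comp3 Vel 2) p0 (eS b))
      + (comp3 C 0 p0 * fderiv ℝ (fderiv ℝ (comp3 Vel 0)) p0 (eS a) (eS b)
        + comp3 C 1 p0 * fderiv ℝ (fderiv ℝ (comp3 Vel 1)) p0 (eS a) (eS b)
        + comp3 C 2 p0 * fderiv ℝ (fderiv ℝ (comp3 Vel 2)) p0 (eS a) (eS b))
      = 0 := by
  have hz : fderiv ℝ (HbF C Vel b) p0 = 0 := by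
    have he : HbF C Vel b = fun _ => (0:ℝ) := funext hH
    rw [he]
    exact fderiv_const_apply 0
  have hT1 := hasFDerivAt_Dapply (comp3_contDiff hC b) p0 eT
  have hT2 : ∀ i : Fin 3, _ := fun i : Fin 3 =>
    (hasFDerivAt_Dapply (comp3_contDiff hC b) p0 (eS i)).mul
      (((comp3_contDiff hV i).differentiable (by simp) p0).hasFDerivAt)
  have hT3 : ∀ i : Fin 3, _ := fun i : Fin 3 =>
    (((comp3_contDiff hC i).differentiable (by simp) p0).hasFDerivAt).mul
      (hasFDerivAt_Dapply (comp3_contDiff hV i) p0 (eS b))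
  have hfin : HasFDerivAt (HbF C Vel b) _ p0 :=
    (hT1.add (((hT2 0).add (hT2 1)).add (hT2 2))).add (((hT3 0).add (hT3 1)).add (hT3 2))
  rw [hfin.fderiv] at hz
  have h6 := congrArg (fun L : ℝ × V3 →L[ℝ] ℝ => L (eS a)) hz
  simp only [ContinuousLinearMap.add_apply, ContinuousLinearMap.smul_apply,
    ContinuousLinearMap.comp_apply, ContinuousLinearMap.apply_apply,
    ContinuousLinearMap.zero_apply, smul_eq_mul] at h6
  linear_combination h6



def Phi (C : ℝ → V3 → V3) (ρ : ℝ → V3 → ℝ) (k : Fin 3) : ℝ × V3 → ℝ := fun p =>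
  (sc ρ p)⁻¹ * (fderiv ℝ (comp3 C (k+2)) p (eS (k+1)) - fderiv ℝ (comp3 C (k+1)) p (eS (k+2)))

lemma phi_fderiv (C : ℝ → V3 → V3) (ρ : ℝ → V3 → ℝ)
    (hC : ContDiff ℝ (⊤ : ℕ∞) fun p : ℝ × V3 => C p.1 p.2) (hρ : ContDiff ℝ (⊤ : ℕ∞) (sc ρ))
    (k : Fin 3) (p0 : ℝ × V3) (hne : sc ρ p0 ≠ 0) :
    DifferentiableAt ℝ (Phi C ρ k) p0 ∧ ∀ v,
      fderiv ℝ (Phi C ρ k) p0 v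
        = (sc ρ p0)⁻¹ * (fderiv ℝ (fderiv ℝ (comp3 C (k+2))) p0 v (eS (k+1))
              - fderiv ℝ (fderiv ℝ (comp3 C (k+1))) p0 v (eS (k+2)))
          + (fderiv ℝ (comp3 C (k+2)) p0 (eS (k+1)) - fderiv ℝ (comp3 C (k+1)) p0 (eS (k+2)))
            * (-((sc ρ p0)^2)⁻¹ * fderiv ℝ (sc ρ) p0 v) := by
  have hsub := (hasFDerivAt_Dapply (comp3_contDiff hC (k+2)) p0 (eS (k+1))).sub
    (hasFDerivAt_Dapply (comp3_contDiff hC (k+1)) p0 (eS (k+2)))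
  have hinv := hasFDerivAt_inv_comp ((hρ.differentiable (by simp) p0).hasFDerivAt) hne
  have hfin : HasFDerivAt (Phi C ρ k) _ p0 := hinv.mul hsub
  refine ⟨hfin.differentiableAt, fun v => ?_⟩
  rw [hfin.fderiv]
  simp only [ContinuousLinearMap.add_apply, ContinuousLinearMap.sub_apply,
    ContinuousLinearMap.smul_apply, ContinuousLinearMap.comp_apply,
    ContinuousLinearMap.apply_apply, smul_eq_mul]


set_option maxHeartbeats 2000000 in
/-- If the covector `C*` has zero convective derivative and `ρ` satisfies the continuity
equation, then `U = (1/ρ) rot C` is convected by the flow: `dU/dt − (∂V/∂x)U = 0`. -/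
theorem stmt_10 (Vel C : ℝ → V3 → V3) (ρ : ℝ → V3 → ℝ)
    (hV : SmoothTV Vel) (hC : SmoothTV C) (hρ : SmoothT ρ)
    (hρpos : ∀ (t : ℝ) (x : V3), 0 < ρ t x)
    (hconv : ∀ (t : ℝ) (x : V3), convD Vel C t x = 0)
    (hcont : ∀ (t : ℝ) (x : V3), matD Vel ρ t x + ρ t x * div3 (Vel t) x = 0) :
    ∀ (t : ℝ) (x : V3),
      matDvec Vel (fun τ y => (ρ τ y)⁻¹ • curl3 (C τ) y) t x
        - jacApply Vel t x ((ρ t x)⁻¹ • curl3 (C t) x) = 0 := by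
  intro t x
  have hC' : ContDiff ℝ (⊤ : ℕ∞) fun p : ℝ × V3 => C p.1 p.2 := hC
  have hV' : ContDiff ℝ (⊤ : ℕ∞) fun p : ℝ × V3 => Vel p.1 p.2 := hV
  have hρ' : ContDiff ℝ (⊤ : ℕ∞) (sc ρ) := hρ
  have dC : ∀ (i : Fin 3) (p : ℝ × V3), DifferentiableAt ℝ (comp3 C i) p :=
    fun i p => ((comp3_contDiff hC' i).differentiable (by simp)) p
  have dV : ∀ (i : Fin 3) (p : ℝ × V3), DifferentiableAt ℝ (comp3 Vel i) p :=
    fun i p => ((comp3_contDiff hV' i).differentiable (by simp)) p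
  have dRd : ∀ p : ℝ × V3, DifferentiableAt ℝ (sc ρ) p := fun p => (hρ'.differentiable (by simp)) p
  have hpdC : ∀ (a b : Fin 3) (τ : ℝ) (y : V3),
      fderiv ℝ (fun z => C τ z b) y (Pi.single a 1) = fderiv ℝ (comp3 C b) (τ, y) (eS a) :=
    fun a b τ y => slice_pd (dC b (τ, y)) a
  have hpdV : ∀ (a b : Fin 3) (τ : ℝ) (y : V3),
      fderiv ℝ (fun z => Vel τ z b) y (Pi.single a 1) = fderiv ℝ (comp3 Vel b) (τ, y) (eS a) :=
    fun a b τ y => slice_pd (dV b (τ, y)) a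
  have hpdR : ∀ (a : Fin 3) (τ : ℝ) (y : V3),
      fderiv ℝ (fun z => ρ τ z) y (Pi.single a 1) = fderiv ℝ (sc ρ) (τ, y) (eS a) :=
    fun a τ y => slice_pd (dRd (τ, y)) a
  have hdtC : ∀ (b : Fin 3) (τ : ℝ) (y : V3),
      deriv (fun s => C s y b) τ = fderiv ℝ (comp3 C b) (τ, y) eT :=
    fun b τ y => slice_deriv (dC b (τ, y))
  have hdtR : ∀ (τ : ℝ) (y : V3),
      deriv (fun s => ρ s y) τ = fderiv ℝ (sc ρ) (τ, y) eT :=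
    fun τ y => slice_deriv (dRd (τ, y))
  have scval : ∀ (τ : ℝ) (y : V3), sc ρ (τ, y) = ρ τ y := fun _ _ => rfl
  have c3vC : ∀ (i : Fin 3) (τ : ℝ) (y : V3), comp3 C i (τ, y) = C τ y i := fun _ _ _ => rfl
  have c3vV : ∀ (i : Fin 3) (τ : ℝ) (y : V3), comp3 Vel i (τ, y) = Vel τ y i := fun _ _ _ => rfl
  have hH : ∀ (b : Fin 3) (p : ℝ × V3), HbF C Vel b p = 0 := by
    rintro b ⟨τ, y⟩
    have h := congrFun (hconv τ y) b
    simp only [convD, matDvec, matD, rowJac, dot3, grad3, pd, Fin.sum_univ_three,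
      Pi.add_apply, Pi.zero_apply] at h
    simp only [hdtC, hpdC, hpdV] at h
    simp only [← c3vC, ← c3vV] at h
    simp only [HbF]
    linear_combination h
  have hcont' := hcont t x
  simp only [matD, dot3, grad3, div3, pd, Fin.sum_univ_three] at hcont'
  simp only [hdtR, hpdR, hpdV] at hcont'
  simp only [← c3vV, ← scval] at hcont'
  have hcurl : ∀ (k : Fin 3) (τ : ℝ) (y : V3), curl3 (C τ) y k
      = fderiv ℝ (comp3 C (k+2)) (τ, y) (eS (k+1))
        - fderiv ℝ (comp3 C (k+1)) (τ, y) (eS (k+2)) := by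
    intro k τ y
    fin_cases k <;> simp [curl3, pd, hpdC]
  have hPhiVal : ∀ (k : Fin 3) (τ : ℝ) (y : V3),
      (ρ τ y)⁻¹ * curl3 (C τ) y k = Phi C ρ k (τ, y) := by
    intro k τ y
    rw [hcurl k τ y]
    simp only [Phi, scval]
  have hPhiEx : ∀ (k : Fin 3) (τ : ℝ) (y : V3),
      Phi C ρ k (τ, y) = (sc ρ (τ, y))⁻¹ * (fderiv ℝ (comp3 C (k+2)) (τ, y) (eS (k+1))
        - fderiv ℝ (comp3 C (k+1)) (τ, y) (eS (k+2))) := by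
    intro k τ y; simp only [Phi]
  have hne : sc ρ (t, x) ≠ 0 := ne_of_gt (hρpos t x)
  have hPhiD : ∀ k : Fin 3, DifferentiableAt ℝ (Phi C ρ k) (t, x) :=
    fun k => (phi_fderiv C ρ hC' hρ' k (t, x) hne).1
  have hPhiF : ∀ (k : Fin 3) (v : ℝ × V3),
      fderiv ℝ (Phi C ρ k) (t, x) v
        = (sc ρ (t, x))⁻¹ * (fderiv ℝ (fderiv ℝ (comp3 C (k+2))) (t, x) v (eS (k+1))
              - fderiv ℝ (fderiv ℝ (comp3 C (k+1))) (t, x) v (eS (k+2)))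
          + (fderiv ℝ (comp3 C (k+2)) (t, x) (eS (k+1))
              - fderiv ℝ (comp3 C (k+1)) (t, x) (eS (k+2)))
            * (-((sc ρ (t, x))^2)⁻¹ * fderiv ℝ (sc ρ) (t, x) v) :=
    fun k => (phi_fderiv C ρ hC' hρ' k (t, x) hne).2
  have hdtPhi : ∀ k : Fin 3,
      deriv (fun s => Phi C ρ k (s, x)) t = fderiv ℝ (Phi C ρ k) (t, x) eT :=
    fun k => slice_deriv (hPhiD k)
  have hpdPhi : ∀ (k j : Fin 3), fderiv ℝ (fun y => Phi C ρ k (t, y)) x (Pi.single j 1)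
      = fderiv ℝ (Phi C ρ k) (t, x) (eS j) := fun k j => slice_pd (hPhiD k) j
  have symC := fun b : Fin 3 => sderiv_comm (comp3_contDiff hC' b) (t, x)
  have symG := fun b : Fin 3 => sderiv_comm (comp3_contDiff hV' b) (t, x)
  have hrr : sc ρ (t, x) * (sc ρ (t, x))⁻¹ = 1 := mul_inv_cancel₀ hne
  have E := fun a b : Fin 3 => diffH C Vel hC' hV' b (hH b) (t, x) a
  refine funext fun k => ?_
  simp only [Pi.sub_apply, Pi.zero_apply, matDvec, matD, jacApply, dot3, grad3, pd,
    Fin.sum_univ_three, Pi.smul_apply, smul_eq_mul]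
  simp only [hPhiVal]
  simp only [hdtPhi, hpdPhi, hpdV]
  simp only [hPhiF, hPhiEx]
  simp only [← c3vV, ← scval]
  have f01 : (0:Fin 3)+1 = 1 := rfl
  have f02 : (0:Fin 3)+2 = 2 := rfl
  have f11 : (1:Fin 3)+1 = 2 := rfl
  have f12 : (1:Fin 3)+2 = 0 := rfl
  have f21 : (2:Fin 3)+1 = 0 := rfl
  have f22 : (2:Fin 3)+2 = 1 := rfl
  rcases (by decide : ∀ m : Fin 3, m = 0 ∨ m = 1 ∨ m = 2) k with hk | hk | hk <;> subst hk
  · simp only [f01, f02, Fin.isValue, f11, f12, f21, f22]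
    linear_combination
        (sc ρ (t, x))⁻¹ * E 1 2 - (sc ρ (t, x))⁻¹ * E 2 1 - ((fderiv ℝ (comp3 C 2) (t, x)) (eS 1) - (fderiv ℝ (comp3 C 1) (t, x)) (eS 2)) * ((sc ρ (t, x))^2)⁻¹ * hcont'
        + (sc ρ (t, x))⁻¹ * symC 2 eT (eS 1) - (sc ρ (t, x))⁻¹ * symC 1 eT (eS 2)
        + (sc ρ (t, x))⁻¹ * comp3 Vel 0 (t, x) * symC 2 (eS 0) (eS 1) - (sc ρ (t, x))⁻¹ * comp3 Vel 0 (t, x) * symC 1 (eS 0) (eS 2)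
        + (sc ρ (t, x))⁻¹ * comp3 Vel 1 (t, x) * symC 2 (eS 1) (eS 1) - (sc ρ (t, x))⁻¹ * comp3 Vel 1 (t, x) * symC 1 (eS 1) (eS 2)
        + (sc ρ (t, x))⁻¹ * comp3 Vel 2 (t, x) * symC 2 (eS 2) (eS 1) - (sc ρ (t, x))⁻¹ * comp3 Vel 2 (t, x) * symC 1 (eS 2) (eS 2)
        - (sc ρ (t, x))⁻¹ * comp3 C 0 (t, x) * symG 0 (eS 1) (eS 2)
        - (sc ρ (t, x))⁻¹ * comp3 C 1 (t, x) * symG 1 (eS 1) (eS 2)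
        - (sc ρ (t, x))⁻¹ * comp3 C 2 (t, x) * symG 2 (eS 1) (eS 2)
        + (((fderiv ℝ (comp3 C 2) (t, x)) (eS 1) - (fderiv ℝ (comp3 C 1) (t, x)) (eS 2)) * ((fderiv ℝ (comp3 Vel 0) (t, x)) (eS 0) + (fderiv ℝ (comp3 Vel 1) (t, x)) (eS 1) + (fderiv ℝ (comp3 Vel 2) (t, x)) (eS 2)) * (sc ρ (t, x))⁻¹) * hrr
  · simp only [f01, f02, Fin.isValue, f11, f12, f21, f22]
    linear_combination
        (sc ρ (t, x))⁻¹ * E 2 0 - (sc ρ (t, x))⁻¹ * E 0 2 - ((fderiv ℝ (comp3 C 0) (t, x)) (eS 2) - (fderiv ℝ (comp3 C 2) (t, x)) (eS 0)) * ((sc ρ (t, x))^2)⁻¹ * hcont'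
        + (sc ρ (t, x))⁻¹ * symC 0 eT (eS 2) - (sc ρ (t, x))⁻¹ * symC 2 eT (eS 0)
        + (sc ρ (t, x))⁻¹ * comp3 Vel 0 (t, x) * symC 0 (eS 0) (eS 2) - (sc ρ (t, x))⁻¹ * comp3 Vel 0 (t, x) * symC 2 (eS 0) (eS 0)
        + (sc ρ (t, x))⁻¹ * comp3 Vel 1 (t, x) * symC 0 (eS 1) (eS 2) - (sc ρ (t, x))⁻¹ * comp3 Vel 1 (t, x) * symC 2 (eS 1) (eS 0)
        + (sc ρ (t, x))⁻¹ * comp3 Vel 2 (t, x) * symC 0 (eS 2) (eS 2) - (sc ρ (t, x))⁻¹ * comp3 Vel 2 (t, x) * symC 2 (eS 2) (eS 0)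
        - (sc ρ (t, x))⁻¹ * comp3 C 0 (t, x) * symG 0 (eS 2) (eS 0)
        - (sc ρ (t, x))⁻¹ * comp3 C 1 (t, x) * symG 1 (eS 2) (eS 0)
        - (sc ρ (t, x))⁻¹ * comp3 C 2 (t, x) * symG 2 (eS 2) (eS 0)
        + (((fderiv ℝ (comp3 C 0) (t, x)) (eS 2) - (fderiv ℝ (comp3 C 2) (t, x)) (eS 0)) * ((fderiv ℝ (comp3 Vel 0) (t, x)) (eS 0) + (fderiv ℝ (comp3 Vel 1) (t, x)) (eS 1) + (fderiv ℝ (comp3 Vel 2) (t, x)) (eS 2)) * (sc ρ (t, x))⁻¹) * hrr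
  · simp only [f01, f02, Fin.isValue, f11, f12, f21, f22]
    linear_combination
        (sc ρ (t, x))⁻¹ * E 0 1 - (sc ρ (t, x))⁻¹ * E 1 0 - ((fderiv ℝ (comp3 C 1) (t, x)) (eS 0) - (fderiv ℝ (comp3 C 0) (t, x)) (eS 1)) * ((sc ρ (t, x))^2)⁻¹ * hcont'
        + (sc ρ (t, x))⁻¹ * symC 1 eT (eS 0) - (sc ρ (t, x))⁻¹ * symC 0 eT (eS 1)
        + (sc ρ (t, x))⁻¹ * comp3 Vel 0 (t, x) * symC 1 (eS 0) (eS 0) - (sc ρ (t, x))⁻¹ * comp3 Vel 0 (t, x) * symC 0 (eS 0) (eS 1)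
        + (sc ρ (t, x))⁻¹ * comp3 Vel 1 (t, x) * symC 1 (eS 1) (eS 0) - (sc ρ (t, x))⁻¹ * comp3 Vel 1 (t, x) * symC 0 (eS 1) (eS 1)
        + (sc ρ (t, x))⁻¹ * comp3 Vel 2 (t, x) * symC 1 (eS 2) (eS 0) - (sc ρ (t, x))⁻¹ * comp3 Vel 2 (t, x) * symC 0 (eS 2) (eS 1)
        - (sc ρ (t, x))⁻¹ * comp3 C 0 (t, x) * symG 0 (eS 0) (eS 1)
        - (sc ρ (t, x))⁻¹ * comp3 C 1 (t, x) * symG 1 (eS 0) (eS 1)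
        - (sc ρ (t, x))⁻¹ * comp3 C 2 (t, x) * symG 2 (eS 0) (eS 1)
        + (((fderiv ℝ (comp3 C 1) (t, x)) (eS 0) - (fderiv ℝ (comp3 C 0) (t, x)) (eS 1)) * ((fderiv ℝ (comp3 Vel 0) (t, x)) (eS 0) + (fderiv ℝ (comp3 Vel 1) (t, x)) (eS 1) + (fderiv ℝ (comp3 Vel 2) (t, x)) (eS 2)) * (sc ρ (t, x))⁻¹) * hrr
end
end

section
/- (Generalized Cauchy theorem for homentropic motions) Suppose d_c(V*) = grad*(½|V|² − g − Ω) + u grad* T with T constant throughout the flow, and ρ satisfies the continuity equation dρ/dt + ρ div V = 0. Then the vector (1/ρ) rot V is convected by the flow: d/dt[(1/ρ) rot V] − (∂V/∂x)[(1/ρ) rot V] = 0. -/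
open scoped BigOperators

noncomputable section

/-! ### Auxiliary machinery: spacetime directional derivatives -/

abbrev Pst : Type := ℝ × V3

/-- Directional derivative on spacetime. -/
def Dd (w : Pst) (f : Pst → ℝ) (p : Pst) : ℝ := fderiv ℝ f p w

/-- Time direction. -/
def et : Pst := ((1 : ℝ), (0 : V3))

/-- Spatial directions. -/
def ee (j : Fin 3) : Pst := ((0 : ℝ), Pi.single j 1)

/-- Spacetime components of the velocity. -/
def FF (Vel : ℝ → V3 → V3) (b : Fin 3) : Pst → ℝ := fun q => Vel q.1 q.2 b

/-- Spacetime density. -/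
def RR (ρ : ℝ → V3 → ℝ) : Pst → ℝ := fun q => ρ q.1 q.2

/-- Spacetime potential `g + Ω`. -/
def GG (g Ω : ℝ → V3 → ℝ) : Pst → ℝ := fun q => g q.1 q.2 + Ω q.1 q.2

/-- Acceleration as a spacetime function. -/
def AL (Vel : ℝ → V3 → V3) (b : Fin 3) : Pst → ℝ := fun q =>
  Dd et (FF Vel b) q + (Dd (ee 0) (FF Vel b) q * FF Vel 0 q
    + Dd (ee 1) (FF Vel b) q * FF Vel 1 q + Dd (ee 2) (FF Vel b) q * FF Vel 2 q)

lemma FF_pt (Vel : ℝ → V3 → V3) (b : Fin 3) (τ : ℝ) (y : V3) :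
    FF Vel b (τ, y) = Vel τ y b := rfl

lemma Dd_smooth {f : Pst → ℝ} (hf : ContDiff ℝ (⊤ : ℕ∞) f) (w : Pst) : ContDiff ℝ (⊤ : ℕ∞) (Dd w f) := by
  have h1 : ContDiff ℝ (⊤ : ℕ∞) (fderiv ℝ f) := hf.fderiv_right (by exact (by simp))
  exact h1.clm_apply contDiff_const

lemma Dd_symm {f : Pst → ℝ} (hf : ContDiff ℝ (⊤ : ℕ∞) f) (v w : Pst) (p : Pst) :
    Dd w (Dd v f) p = Dd v (Dd w f) p := by
  have hsym := (hf.contDiffAt (x := p)).isSymmSndFDerivAt (by rw [minSmoothness_of_isRCLikeNormedField]; exact WithTop.coe_le_coe.mpr (le_top : (2 : ℕ∞) ≤ ⊤))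
  have h1 : ContDiff ℝ (⊤ : ℕ∞) (fderiv ℝ f) := hf.fderiv_right (by simp)
  have h2 : ∀ u : Pst, fderiv ℝ (Dd u f) p
      = (ContinuousLinearMap.apply ℝ ℝ u).comp (fderiv ℝ (fderiv ℝ f) p) := by
    intro u
    rw [show Dd u f = fun q => (ContinuousLinearMap.apply ℝ ℝ u) (fderiv ℝ f q) from rfl]
    exact ((ContinuousLinearMap.apply ℝ ℝ u).hasFDerivAt.comp p
      (h1.differentiable (by simp) p).hasFDerivAt).fderiv
  show fderiv ℝ (Dd v f) p w = fderiv ℝ (Dd w f) p v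
  rw [h2 v, h2 w]
  exact hsym.eq w v

lemma Dd_add {f g : Pst → ℝ} (hf : Differentiable ℝ f) (hg : Differentiable ℝ g) (w p : Pst) :
    Dd w (fun q => f q + g q) p = Dd w f p + Dd w g p := by
  unfold Dd; rw [fderiv_fun_add (hf p) (hg p)]; rfl

lemma Dd_sub {f g : Pst → ℝ} (hf : Differentiable ℝ f) (hg : Differentiable ℝ g) (w p : Pst) :
    Dd w (fun q => f q - g q) p = Dd w f p - Dd w g p := by
  unfold Dd; rw [fderiv_fun_sub (hf p) (hg p)]; rfl

lemma Dd_mul {f g : Pst → ℝ} (hf : Differentiable ℝ f) (hg : Differentiable ℝ g) (w p : Pst) :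
    Dd w (fun q => f q * g q) p = f p * Dd w g p + g p * Dd w f p := by
  unfold Dd; rw [fderiv_fun_mul (hf p) (hg p)]
  simp only [ContinuousLinearMap.add_apply, ContinuousLinearMap.smul_apply, smul_eq_mul]

lemma Dd_cmul {f : Pst → ℝ} (hf : Differentiable ℝ f) (c : ℝ) (w p : Pst) :
    Dd w (fun q => c * f q) p = c * Dd w f p := by
  unfold Dd; rw [fderiv_const_mul (hf p) c]; rfl

lemma Dd_inv {f : Pst → ℝ} (hf : Differentiable ℝ f) (w p : Pst) (hne : f p ≠ 0) :
    Dd w (fun q => (f q)⁻¹) p = -((f p)^2)⁻¹ * Dd w f p := by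
  unfold Dd
  rw [show (fun q => (f q)⁻¹) = Inv.inv ∘ f from rfl,
    fderiv_comp p (differentiableAt_inv hne) (hf p), fderiv_inv' hne]
  simp only [ContinuousLinearMap.comp_apply, ContinuousLinearMap.neg_apply,
    ContinuousLinearMap.mulLeftRight_apply, sq]
  field_simp

lemma Dd_neg {f : Pst → ℝ} (w p : Pst) : Dd w (fun q => -f q) p = -Dd w f p := by
  unfold Dd; rw [fderiv_fun_neg]; rfl

lemma pd_slice {f : Pst → ℝ} (hf : Differentiable ℝ f) (t : ℝ) (x : V3) (j : Fin 3) :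
    pd j (fun y => f (t, y)) x = Dd (ee j) f (t, x) := by
  have hι : HasFDerivAt (fun y : V3 => (t, y))
      ((0 : V3 →L[ℝ] ℝ).prod (ContinuousLinearMap.id ℝ V3)) x :=
    HasFDerivAt.prodMk (hasFDerivAt_const t x) (hasFDerivAt_id x)
  have h := ((hf (t, x)).hasFDerivAt.comp x hι).fderiv
  unfold pd Dd
  rw [show (fun y : V3 => f (t, y)) = f ∘ (fun y : V3 => (t, y)) from rfl, h]
  rfl

lemma deriv_slice {f : Pst → ℝ} (hf : Differentiable ℝ f) (t : ℝ) (x : V3) :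
    deriv (fun τ => f (τ, x)) t = Dd et f (t, x) := by
  have hι : HasFDerivAt (fun τ : ℝ => (τ, x))
      ((ContinuousLinearMap.id ℝ ℝ).prod (0 : ℝ →L[ℝ] V3)) t :=
    HasFDerivAt.prodMk (hasFDerivAt_id t) (hasFDerivAt_const x t)
  have h := (((hf (t, x)).hasFDerivAt.comp t hι).hasDerivAt).deriv
  rw [show (fun τ : ℝ => f (τ, x)) = f ∘ (fun τ : ℝ => (τ, x)) from rfl, h]
  rfl

lemma pd_vel (Vel : ℝ → V3 → V3) (hV : SmoothTV Vel) (b a : Fin 3) (τ : ℝ) (y : V3) :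
    pd a (fun z => Vel τ z b) y = Dd (ee a) (FF Vel b) (τ, y) :=
  pd_slice (f := FF Vel b) ((contDiff_pi.mp hV b).differentiable (by simp)) τ y a

lemma matD_slice (Vel : ℝ → V3 → V3) (f : Pst → ℝ) (hf : Differentiable ℝ f) (t : ℝ) (x : V3) :
    matD Vel (fun τ y => f (τ, y)) t x
      = Dd et f (t, x) + (Dd (ee 0) f (t, x) * Vel t x 0
        + Dd (ee 1) f (t, x) * Vel t x 1 + Dd (ee 2) f (t, x) * Vel t x 2) := by
  simp only [matD, dot3, grad3, Fin.sum_univ_three]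
  rw [deriv_slice hf, pd_slice hf t x 0, pd_slice hf t x 1, pd_slice hf t x 2]

lemma curl0 (Vel : ℝ → V3 → V3) (hV : SmoothTV Vel) (τ : ℝ) (y : V3) :
    curl3 (Vel τ) y 0 = Dd (ee 1) (FF Vel 2) (τ, y) - Dd (ee 2) (FF Vel 1) (τ, y) := by
  show pd 1 (fun z => Vel τ z 2) y - pd 2 (fun z => Vel τ z 1) y = _
  rw [pd_vel Vel hV 2 1 τ y, pd_vel Vel hV 1 2 τ y]

lemma curl1 (Vel : ℝ → V3 → V3) (hV : SmoothTV Vel) (τ : ℝ) (y : V3) :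
    curl3 (Vel τ) y 1 = Dd (ee 2) (FF Vel 0) (τ, y) - Dd (ee 0) (FF Vel 2) (τ, y) := by
  show pd 2 (fun z => Vel τ z 0) y - pd 0 (fun z => Vel τ z 2) y = _
  rw [pd_vel Vel hV 0 2 τ y, pd_vel Vel hV 2 0 τ y]

lemma curl2 (Vel : ℝ → V3 → V3) (hV : SmoothTV Vel) (τ : ℝ) (y : V3) :
    curl3 (Vel τ) y 2 = Dd (ee 0) (FF Vel 1) (τ, y) - Dd (ee 1) (FF Vel 0) (τ, y) := by
  show pd 0 (fun z => Vel τ z 1) y - pd 1 (fun z => Vel τ z 0) y = _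
  rw [pd_vel Vel hV 1 0 τ y, pd_vel Vel hV 0 1 τ y]

lemma Dd_accel (Vel : ℝ → V3 → V3) (hV : SmoothTV Vel) (a : Pst) (b : Fin 3) (p : Pst) :
    Dd a (AL Vel b) p
      = Dd a (Dd et (FF Vel b)) p
        + (Dd (ee 0) (FF Vel b) p * Dd a (FF Vel 0) p + FF Vel 0 p * Dd a (Dd (ee 0) (FF Vel b)) p
         + (Dd (ee 1) (FF Vel b) p * Dd a (FF Vel 1) p + FF Vel 1 p * Dd a (Dd (ee 1) (FF Vel b)) p)
         + (Dd (ee 2) (FF Vel b) p * Dd a (FF Vel 2) p + FF Vel 2 p * Dd a (Dd (ee 2) (FF Vel b)) p)) := by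
  have hF : ∀ k, ContDiff ℝ (⊤ : ℕ∞) (FF Vel k) := fun k => contDiff_pi.mp hV k
  have hFd : ∀ k, Differentiable ℝ (FF Vel k) := fun k => (hF k).differentiable (by simp)
  have hD : ∀ (w : Pst) (k : Fin 3), Differentiable ℝ (Dd w (FF Vel k)) :=
    fun w k => (Dd_smooth (hF k) w).differentiable (by simp)
  unfold AL
  rw [Dd_add (hD et b) ((((hD (ee 0) b).fun_mul (hFd 0)).fun_add ((hD (ee 1) b).fun_mul (hFd 1))).fun_add
        ((hD (ee 2) b).fun_mul (hFd 2))),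
      Dd_add (((hD (ee 0) b).fun_mul (hFd 0)).fun_add ((hD (ee 1) b).fun_mul (hFd 1)))
        ((hD (ee 2) b).fun_mul (hFd 2)),
      Dd_add ((hD (ee 0) b).fun_mul (hFd 0)) ((hD (ee 1) b).fun_mul (hFd 1)),
      Dd_mul (hD (ee 0) b) (hFd 0), Dd_mul (hD (ee 1) b) (hFd 1), Dd_mul (hD (ee 2) b) (hFd 2)]

lemma Dd_invmul (R W : Pst → ℝ) (hR : Differentiable ℝ R) (hW : Differentiable ℝ W)
    (hnz : ∀ q, R q ≠ 0) (w p : Pst) :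
    Dd w (fun q => (R q)⁻¹ * W q) p
      = (R p)⁻¹ * Dd w W p - (R p)⁻¹ * (R p)⁻¹ * (W p * Dd w R p) := by
  rw [Dd_mul (f := fun q => (R q)⁻¹) (hR.inv hnz) hW, Dd_inv hR w p (hnz p)]
  ring

lemma Dd_bern (Vel : ℝ → V3 → V3) (g Ω : ℝ → V3 → ℝ) (hV : SmoothTV Vel)
    (hg : SmoothT g) (hΩ : SmoothT Ω) (b : Fin 3) (τ : ℝ) (y : V3) :
    pd b (fun z => 1 / 2 * dot3 (Vel τ z) (Vel τ z) - g τ z - Ω τ z) y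
      = (Vel τ y 0 * Dd (ee b) (FF Vel 0) (τ, y) + Vel τ y 1 * Dd (ee b) (FF Vel 1) (τ, y)
          + Vel τ y 2 * Dd (ee b) (FF Vel 2) (τ, y)) - Dd (ee b) (GG g Ω) (τ, y) := by
  have hF : ∀ k, ContDiff ℝ (⊤ : ℕ∞) (FF Vel k) := fun k => contDiff_pi.mp hV k
  have hFd : ∀ k, Differentiable ℝ (FF Vel k) := fun k => (hF k).differentiable (by simp)
  have hsum : Differentiable ℝ (fun q : Pst =>
      FF Vel 0 q * FF Vel 0 q + FF Vel 1 q * FF Vel 1 q + FF Vel 2 q * FF Vel 2 q) :=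
    (((hFd 0).mul (hFd 0)).add ((hFd 1).mul (hFd 1))).add ((hFd 2).mul (hFd 2))
  have hGd : Differentiable ℝ (GG g Ω) := (hg.add hΩ).differentiable (by simp)
  have h1 : (fun z => 1 / 2 * dot3 (Vel τ z) (Vel τ z) - g τ z - Ω τ z)
      = fun z => (fun q : Pst => (1 / 2 : ℝ) * (FF Vel 0 q * FF Vel 0 q + FF Vel 1 q * FF Vel 1 q
          + FF Vel 2 q * FF Vel 2 q) - GG g Ω q) (τ, z) := by
    funext z
    simp only [dot3, Fin.sum_univ_three, FF, GG]
    ring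
  rw [h1, pd_slice ((hsum.const_mul (1 / 2 : ℝ)).fun_sub hGd) τ y b,
      Dd_sub (hsum.const_mul (1 / 2 : ℝ)) hGd, Dd_cmul hsum,
      Dd_add (((hFd 0).fun_mul (hFd 0)).fun_add ((hFd 1).fun_mul (hFd 1))) ((hFd 2).fun_mul (hFd 2)),
      Dd_add ((hFd 0).fun_mul (hFd 0)) ((hFd 1).fun_mul (hFd 1)),
      Dd_mul (hFd 0) (hFd 0), Dd_mul (hFd 1) (hFd 1), Dd_mul (hFd 2) (hFd 2)]
  simp only [FF_pt]
  ring

/-- Generalized Cauchy theorem for homentropic motions: if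
`d_c(V*) = grad*(½|V|² − g − Ω) + u grad* T` with `T` constant throughout the flow and
`ρ` satisfies the continuity equation, then `(1/ρ) rot V` is convected by the flow. -/
theorem stmt_11 (Vel : ℝ → V3 → V3) (u T g Ω ρ : ℝ → V3 → ℝ)
    (hV : SmoothTV Vel) (hu : SmoothT u) (hT : SmoothT T) (hg : SmoothT g)
    (hΩ : SmoothT Ω) (hρ : SmoothT ρ)
    (hρpos : ∀ (t : ℝ) (x : V3), 0 < ρ t x)
    (hmot : ∀ (t : ℝ) (x : V3),
      convD Vel Vel t x
        = grad3 (fun y => (1 / 2) * dot3 (Vel t y) (Vel t y) - g t y - Ω t y) x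
          + u t x • grad3 (T t) x)
    (hTconst : ∃ c : ℝ, ∀ (t : ℝ) (x : V3), T t x = c)
    (hcont : ∀ (t : ℝ) (x : V3), matD Vel ρ t x + ρ t x * div3 (Vel t) x = 0) :
    ∀ (t : ℝ) (x : V3),
      matDvec Vel (fun τ y => (ρ τ y)⁻¹ • curl3 (Vel τ) y) t x
        - jacApply Vel t x ((ρ t x)⁻¹ • curl3 (Vel t) x) = 0 := by
  obtain ⟨c, hc⟩ := hTconst
  have hF : ∀ k, ContDiff ℝ (⊤ : ℕ∞) (FF Vel k) := fun k => contDiff_pi.mp hV k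
  have hFd : ∀ k, Differentiable ℝ (FF Vel k) := fun k => (hF k).differentiable (by simp)
  have hDFd : ∀ (w : Pst) (k : Fin 3), Differentiable ℝ (Dd w (FF Vel k)) :=
    fun w k => (Dd_smooth (hF k) w).differentiable (by simp)
  have hRc : ContDiff ℝ (⊤ : ℕ∞) (RR ρ) := hρ
  have hRd : Differentiable ℝ (RR ρ) := hRc.differentiable (by simp)
  have hRnz : ∀ q : Pst, RR ρ q ≠ 0 := fun q => ne_of_gt (hρpos q.1 q.2)
  have hGc : ContDiff ℝ (⊤ : ℕ∞) (GG g Ω) := hg.add hΩ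
  have hA : ∀ (b : Fin 3) (τ : ℝ) (y : V3), AL Vel b (τ, y) = -Dd (ee b) (GG g Ω) (τ, y) := by
    intro b τ y
    have h := congrFun (hmot τ y) b
    simp only [convD, Pi.add_apply, matDvec, rowJac, grad3, Pi.smul_apply, smul_eq_mul,
      Fin.sum_univ_three] at h
    have hT0 : pd b (T τ) y = 0 := by
      rw [show T τ = fun _ : V3 => c from funext fun z => hc τ z]
      simp [pd]
    have hmm : matD Vel (fun τ' y' => Vel τ' y' b) τ y
        = Dd et (FF Vel b) (τ, y) + (Dd (ee 0) (FF Vel b) (τ, y) * Vel τ y 0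
          + Dd (ee 1) (FF Vel b) (τ, y) * Vel τ y 1 + Dd (ee 2) (FF Vel b) (τ, y) * Vel τ y 2) :=
      matD_slice Vel (FF Vel b) (hFd b) τ y
    rw [hmm, hT0, Dd_bern Vel g Ω hV hg hΩ b τ y, pd_vel Vel hV 0 b τ y,
      pd_vel Vel hV 1 b τ y, pd_vel Vel hV 2 b τ y] at h
    show Dd et (FF Vel b) (τ, y) + (Dd (ee 0) (FF Vel b) (τ, y) * FF Vel 0 (τ, y)
      + Dd (ee 1) (FF Vel b) (τ, y) * FF Vel 1 (τ, y)
      + Dd (ee 2) (FF Vel b) (τ, y) * FF Vel 2 (τ, y)) = -Dd (ee b) (GG g Ω) (τ, y)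
    simp only [FF_pt]
    linear_combination h
  intro t x
  have hrr : (ρ t x)⁻¹ * (ρ t x)⁻¹ * ρ t x = (ρ t x)⁻¹ := by
    have hne : ρ t x ≠ 0 := ne_of_gt (hρpos t x)
    field_simp
  have hsymF : ∀ (b : Fin 3) (v w : Pst),
      Dd w (Dd v (FF Vel b)) ((t, x) : Pst) = Dd v (Dd w (FF Vel b)) (t, x) :=
    fun b v w => Dd_symm (hF b) v w (t, x)
  have hX : ∀ a b : Fin 3, Dd (ee a) (AL Vel b) ((t, x) : Pst)
      = Dd (ee a) (Dd et (FF Vel b)) (t, x)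
        + (Dd (ee 0) (FF Vel b) (t, x) * Dd (ee a) (FF Vel 0) (t, x)
            + Vel t x 0 * Dd (ee a) (Dd (ee 0) (FF Vel b)) (t, x)
         + (Dd (ee 1) (FF Vel b) (t, x) * Dd (ee a) (FF Vel 1) (t, x)
            + Vel t x 1 * Dd (ee a) (Dd (ee 1) (FF Vel b)) (t, x))
         + (Dd (ee 2) (FF Vel b) (t, x) * Dd (ee a) (FF Vel 2) (t, x)
            + Vel t x 2 * Dd (ee a) (Dd (ee 2) (FF Vel b)) (t, x))) :=
    fun a b => Dd_accel Vel hV (ee a) b (t, x)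
  have hY : ∀ a b : Fin 3,
      Dd (ee a) (AL Vel b) ((t, x) : Pst) - Dd (ee b) (AL Vel a) (t, x) = 0 := by
    intro a b
    rw [show AL Vel b = fun q => -Dd (ee b) (GG g Ω) q from funext fun q => hA b q.1 q.2,
        show AL Vel a = fun q => -Dd (ee a) (GG g Ω) q from funext fun q => hA a q.1 q.2,
        Dd_neg, Dd_neg, Dd_symm hGc (ee b) (ee a) (t, x)]
    ring
  have hcontE : Dd et (RR ρ) ((t, x) : Pst)
      + (Dd (ee 0) (RR ρ) (t, x) * Vel t x 0 + Dd (ee 1) (RR ρ) (t, x) * Vel t x 1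
        + Dd (ee 2) (RR ρ) (t, x) * Vel t x 2)
      + ρ t x * (Dd (ee 0) (FF Vel 0) (t, x) + Dd (ee 1) (FF Vel 1) (t, x)
        + Dd (ee 2) (FF Vel 2) (t, x)) = 0 := by
    have h := hcont t x
    have hm : matD Vel ρ t x = Dd et (RR ρ) (t, x) + (Dd (ee 0) (RR ρ) (t, x) * Vel t x 0
        + Dd (ee 1) (RR ρ) (t, x) * Vel t x 1 + Dd (ee 2) (RR ρ) (t, x) * Vel t x 2) :=
      matD_slice Vel (RR ρ) hRd t x
    have hdv : div3 (Vel t) x = Dd (ee 0) (FF Vel 0) (t, x) + Dd (ee 1) (FF Vel 1) (t, x)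
        + Dd (ee 2) (FF Vel 2) (t, x) := by
      simp only [div3, Fin.sum_univ_three]
      rw [pd_vel Vel hV 0 0 t x, pd_vel Vel hV 1 1 t x, pd_vel Vel hV 2 2 t x]
    rw [hm, hdv] at h
    linear_combination h
  have hmH : ∀ a1 b1 a2 b2 : Fin 3,
      matD Vel (fun τ y => (ρ τ y)⁻¹
          * (Dd (ee a1) (FF Vel b1) (τ, y) - Dd (ee a2) (FF Vel b2) (τ, y))) t x
        = Dd et (fun q : Pst => (RR ρ q)⁻¹
              * (Dd (ee a1) (FF Vel b1) q - Dd (ee a2) (FF Vel b2) q)) (t, x)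
          + (Dd (ee 0) (fun q : Pst => (RR ρ q)⁻¹
              * (Dd (ee a1) (FF Vel b1) q - Dd (ee a2) (FF Vel b2) q)) (t, x) * Vel t x 0
           + Dd (ee 1) (fun q : Pst => (RR ρ q)⁻¹
              * (Dd (ee a1) (FF Vel b1) q - Dd (ee a2) (FF Vel b2) q)) (t, x) * Vel t x 1
           + Dd (ee 2) (fun q : Pst => (RR ρ q)⁻¹
              * (Dd (ee a1) (FF Vel b1) q - Dd (ee a2) (FF Vel b2) q)) (t, x) * Vel t x 2) :=
    fun a1 b1 a2 b2 => matD_slice Vel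
      (fun q : Pst => (RR ρ q)⁻¹ * (Dd (ee a1) (FF Vel b1) q - Dd (ee a2) (FF Vel b2) q))
      ((hRd.inv hRnz).mul ((hDFd (ee a1) b1).sub (hDFd (ee a2) b2))) t x
  have hDH : ∀ (w : Pst) (a1 b1 a2 b2 : Fin 3),
      Dd w (fun q : Pst => (RR ρ q)⁻¹
          * (Dd (ee a1) (FF Vel b1) q - Dd (ee a2) (FF Vel b2) q)) ((t, x) : Pst)
        = (ρ t x)⁻¹ * (Dd w (Dd (ee a1) (FF Vel b1)) (t, x)
              - Dd w (Dd (ee a2) (FF Vel b2)) (t, x))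
          - (ρ t x)⁻¹ * (ρ t x)⁻¹
            * ((Dd (ee a1) (FF Vel b1) (t, x) - Dd (ee a2) (FF Vel b2) (t, x))
                * Dd w (RR ρ) (t, x)) := by
    intro w a1 b1 a2 b2
    have h1 := Dd_invmul (RR ρ)
      (fun q : Pst => Dd (ee a1) (FF Vel b1) q - Dd (ee a2) (FF Vel b2) q)
      hRd ((hDFd (ee a1) b1).sub (hDFd (ee a2) b2)) hRnz w (t, x)
    rw [Dd_sub (hDFd (ee a1) b1) (hDFd (ee a2) b2)] at h1
    exact h1
  funext i
  fin_cases i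
  · show (matDvec Vel (fun τ y => (ρ τ y)⁻¹ • curl3 (Vel τ) y) t x
        - jacApply Vel t x ((ρ t x)⁻¹ • curl3 (Vel t) x)) (0 : Fin 3) = (0 : V3) (0 : Fin 3)
    simp only [Pi.sub_apply, Pi.zero_apply, matDvec, jacApply, Pi.smul_apply, smul_eq_mul,
      Fin.sum_univ_three, curl0 Vel hV, curl1 Vel hV, curl2 Vel hV, pd_vel Vel hV]
    have h12 := hY 1 2
    rw [hX 1 2, hX 2 1] at h12
    rw [hmH 1 2 2 1, hDH et 1 2 2 1, hDH (ee 0) 1 2 2 1,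
      hDH (ee 1) 1 2 2 1, hDH (ee 2) 1 2 2 1,
      hsymF 2 (ee 1) (et), hsymF 1 (ee 2) (et), hsymF 2 (ee 1) (ee 0), hsymF 1 (ee 2) (ee 0), hsymF 2 (ee 1) (ee 2), hsymF 1 (ee 2) (ee 1)]
    linear_combination (ρ t x)⁻¹ * h12
      - ((ρ t x)⁻¹ * (ρ t x)⁻¹ * (Dd (ee 1) (FF Vel 2) ((t, x) : Pst) - Dd (ee 2) (FF Vel 1) (t, x))) * hcontE
      + ((Dd (ee 1) (FF Vel 2) ((t, x) : Pst) - Dd (ee 2) (FF Vel 1) (t, x)) * (Dd (ee 0) (FF Vel 0) ((t, x) : Pst) + Dd (ee 1) (FF Vel 1) (t, x) + Dd (ee 2) (FF Vel 2) (t, x))) * hrr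
  · show (matDvec Vel (fun τ y => (ρ τ y)⁻¹ • curl3 (Vel τ) y) t x
        - jacApply Vel t x ((ρ t x)⁻¹ • curl3 (Vel t) x)) (1 : Fin 3) = (0 : V3) (1 : Fin 3)
    simp only [Pi.sub_apply, Pi.zero_apply, matDvec, jacApply, Pi.smul_apply, smul_eq_mul,
      Fin.sum_univ_three, curl0 Vel hV, curl1 Vel hV, curl2 Vel hV, pd_vel Vel hV]
    have h12 := hY 2 0
    rw [hX 2 0, hX 0 2] at h12
    rw [hmH 2 0 0 2, hDH et 2 0 0 2, hDH (ee 0) 2 0 0 2,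
      hDH (ee 1) 2 0 0 2, hDH (ee 2) 2 0 0 2,
      hsymF 0 (ee 2) (et), hsymF 2 (ee 0) (et), hsymF 0 (ee 2) (ee 0), hsymF 0 (ee 2) (ee 1), hsymF 2 (ee 0) (ee 1), hsymF 2 (ee 0) (ee 2)]
    linear_combination (ρ t x)⁻¹ * h12
      - ((ρ t x)⁻¹ * (ρ t x)⁻¹ * (Dd (ee 2) (FF Vel 0) ((t, x) : Pst) - Dd (ee 0) (FF Vel 2) (t, x))) * hcontE
      + ((Dd (ee 2) (FF Vel 0) ((t, x) : Pst) - Dd (ee 0) (FF Vel 2) (t, x)) * (Dd (ee 0) (FF Vel 0) ((t, x) : Pst) + Dd (ee 1) (FF Vel 1) (t, x) + Dd (ee 2) (FF Vel 2) (t, x))) * hrr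
  · show (matDvec Vel (fun τ y => (ρ τ y)⁻¹ • curl3 (Vel τ) y) t x
        - jacApply Vel t x ((ρ t x)⁻¹ • curl3 (Vel t) x)) (2 : Fin 3) = (0 : V3) (2 : Fin 3)
    simp only [Pi.sub_apply, Pi.zero_apply, matDvec, jacApply, Pi.smul_apply, smul_eq_mul,
      Fin.sum_univ_three, curl0 Vel hV, curl1 Vel hV, curl2 Vel hV, pd_vel Vel hV]
    have h12 := hY 0 1
    rw [hX 0 1, hX 1 0] at h12
    rw [hmH 0 1 1 0, hDH et 0 1 1 0, hDH (ee 0) 0 1 1 0,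
      hDH (ee 1) 0 1 1 0, hDH (ee 2) 0 1 1 0,
      hsymF 1 (ee 0) (et), hsymF 0 (ee 1) (et), hsymF 1 (ee 0) (ee 1), hsymF 1 (ee 0) (ee 2), hsymF 0 (ee 1) (ee 2), hsymF 0 (ee 1) (ee 0)]
    linear_combination (ρ t x)⁻¹ * h12
      - ((ρ t x)⁻¹ * (ρ t x)⁻¹ * (Dd (ee 0) (FF Vel 1) ((t, x) : Pst) - Dd (ee 1) (FF Vel 0) (t, x))) * hcontE
      + ((Dd (ee 0) (FF Vel 1) ((t, x) : Pst) - Dd (ee 1) (FF Vel 0) (t, x)) * (Dd (ee 0) (FF Vel 0) ((t, x) : Pst) + Dd (ee 1) (FF Vel 1) (t, x) + Dd (ee 2) (FF Vel 2) (t, x))) * hrr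
end
end

section
/- If the velocity admits the potential representation V = grad φ + ψ grad T + γ grad ν where the material derivatives satisfy dT/dt = 0, dφ/dt = ½|V|² − g − Ω, dψ/dt = u, dγ/dt = 0, dν/dt = 0, then the convective derivative of V* satisfies d_c(V*) = grad*(½|V|² − g − Ω) + u grad* T, i.e., the thermodynamic form of the equation of motion Γ = u grad T − grad(g + Ω) holds. -/
open scoped BigOperators

noncomputable section

namespace Stmt16Aux

/-- Distinguished tangent vectors in space-time. -/
def eS (i : Fin 3) : ℝ × V3 := ((0:ℝ), Pi.single i 1)
def e0 : ℝ × V3 := ((1:ℝ), (0:V3))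

/-- Uncurried version of a time-dependent scalar field. -/
def unc (f : ℝ → V3 → ℝ) : ℝ × V3 → ℝ := fun p => f p.1 p.2

section Slice
variable {G : ℝ × V3 → ℝ}

lemma hasDerivAt_sliceT {G' : ℝ × V3 →L[ℝ] ℝ} {t : ℝ} {x : V3} (h : HasFDerivAt G G' (t, x)) :
    HasDerivAt (fun τ => G (τ, x)) (G' e0) t :=
  h.comp_hasDerivAt t ((hasDerivAt_id t).prodMk (hasDerivAt_const t x))

lemma hasFDerivAt_sliceX {G' : ℝ × V3 →L[ℝ] ℝ} {t : ℝ} {x : V3} (h : HasFDerivAt G G' (t, x)) :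
    HasFDerivAt (fun y => G (t, y)) (G'.comp (ContinuousLinearMap.inr ℝ ℝ V3)) x :=
  h.comp x ((hasFDerivAt_const t x).prodMk (hasFDerivAt_id x))

lemma pd_sliceX {G' : ℝ × V3 →L[ℝ] ℝ} {t : ℝ} {x : V3} (h : HasFDerivAt G G' (t, x)) (i : Fin 3) :
    pd i (fun y => G (t, y)) x = G' (eS i) := by
  rw [pd, (hasFDerivAt_sliceX h).fderiv]; rfl

lemma deriv_sliceT {G' : ℝ × V3 →L[ℝ] ℝ} {t : ℝ} {x : V3} (h : HasFDerivAt G G' (t, x)) :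
    deriv (fun τ => G (τ, x)) t = G' e0 := (hasDerivAt_sliceT h).deriv

lemma hasFDerivAt_D (hG : ContDiff ℝ (⊤ : ℕ∞) G) (v : ℝ × V3) (p : ℝ × V3) :
    HasFDerivAt (fun q => fderiv ℝ G q v)
      ((ContinuousLinearMap.apply ℝ ℝ v).comp (fderiv ℝ (fderiv ℝ G) p)) p :=
  (ContinuousLinearMap.apply ℝ ℝ v).hasFDerivAt.comp p
    (((hG.fderiv_right (m := (⊤ : ℕ∞)) (by simp)).differentiable (by simp) p).hasFDerivAt)

lemma contDiff_D (hG : ContDiff ℝ (⊤ : ℕ∞) G) (v : ℝ × V3) :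
    ContDiff ℝ (⊤ : ℕ∞) (fun q => fderiv ℝ G q v) :=
  (hG.fderiv_right (by simp)).clm_apply contDiff_const

lemma symm2 (hG : ContDiff ℝ (⊤ : ℕ∞) G) (p v w : ℝ × V3) :
    fderiv ℝ (fderiv ℝ G) p v w = fderiv ℝ (fderiv ℝ G) p w v :=
  second_derivative_symmetric (fun y => (hG.differentiable (by simp) y).hasFDerivAt)
    (((hG.fderiv_right (m := (⊤ : ℕ∞)) (by simp)).differentiable (by simp) p).hasFDerivAt) v w

end Slice

section PdAlgebra
variable {a b : V3 → ℝ} {x : V3}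

lemma pd_add (ha : DifferentiableAt ℝ a x) (hb : DifferentiableAt ℝ b x) (j : Fin 3) :
    pd j (fun y => a y + b y) x = pd j a x + pd j b x := by
  rw [pd, fderiv_fun_add ha hb]; rfl

lemma pd_mul (ha : DifferentiableAt ℝ a x) (hb : DifferentiableAt ℝ b x) (j : Fin 3) :
    pd j (fun y => a y * b y) x = pd j a x * b x + a x * pd j b x := by
  rw [pd, fderiv_fun_mul ha hb]
  simp [pd]
  ring

end PdAlgebra

section Fields
variable (f : ℝ → V3 → ℝ)

lemma pdF (hf : SmoothT f) (s : ℝ) (y : V3) (i : Fin 3) :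
    pd i (f s) y = fderiv ℝ (unc f) (s, y) (eS i) := by
  have hF : ContDiff ℝ (⊤ : ℕ∞) (unc f) := hf
  exact pd_sliceX ((hF.differentiable (by simp) (s, y)).hasFDerivAt) i

lemma derivF (hf : SmoothT f) (s : ℝ) (y : V3) :
    deriv (fun τ => f τ y) s = fderiv ℝ (unc f) (s, y) e0 := by
  have hF : ContDiff ℝ (⊤ : ℕ∞) (unc f) := hf
  exact deriv_sliceT ((hF.differentiable (by simp) (s, y)).hasFDerivAt)

lemma pdDF (hf : SmoothT f) (v : ℝ × V3) (t : ℝ) (x : V3) (j : Fin 3) :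
    pd j (fun y => fderiv ℝ (unc f) (t, y) v) x
      = fderiv ℝ (fderiv ℝ (unc f)) (t, x) (eS j) v := by
  have hF : ContDiff ℝ (⊤ : ℕ∞) (unc f) := hf
  exact pd_sliceX (hasFDerivAt_D hF v (t, x)) j

lemma derivDF (hf : SmoothT f) (v : ℝ × V3) (t : ℝ) (x : V3) :
    deriv (fun τ => fderiv ℝ (unc f) (τ, x) v) t
      = fderiv ℝ (fderiv ℝ (unc f)) (t, x) e0 v := by
  have hF : ContDiff ℝ (⊤ : ℕ∞) (unc f) := hf
  exact deriv_sliceT (hasFDerivAt_D hF v (t, x))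

lemma symmF (hf : SmoothT f) (p v w : ℝ × V3) :
    fderiv ℝ (fderiv ℝ (unc f)) p v w = fderiv ℝ (fderiv ℝ (unc f)) p w v := by
  have hF : ContDiff ℝ (⊤ : ℕ∞) (unc f) := hf
  exact symm2 hF p v w

lemma diffX_F (hf : SmoothT f) (t : ℝ) (x : V3) : DifferentiableAt ℝ (f t) x := by
  have hF : ContDiff ℝ (⊤ : ℕ∞) (unc f) := hf
  exact (hasFDerivAt_sliceX ((hF.differentiable (by simp) (t, x)).hasFDerivAt)).differentiableAt

lemma diffT_F (hf : SmoothT f) (t : ℝ) (x : V3) :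
    DifferentiableAt ℝ (fun τ => f τ x) t := by
  have hF : ContDiff ℝ (⊤ : ℕ∞) (unc f) := hf
  exact (hasDerivAt_sliceT ((hF.differentiable (by simp) (t, x)).hasFDerivAt)).differentiableAt

lemma diffX_DF (hf : SmoothT f) (v : ℝ × V3) (t : ℝ) (x : V3) :
    DifferentiableAt ℝ (fun y => fderiv ℝ (unc f) (t, y) v) x :=
  (hasFDerivAt_sliceX (hasFDerivAt_D (show ContDiff ℝ (⊤ : ℕ∞) (unc f) from hf) v (t, x))).differentiableAt

lemma smooth_gradj (hf : SmoothT f) (j : Fin 3) :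
    SmoothT (fun s y => grad3 (f s) y j) := by
  show ContDiff ℝ (⊤ : ℕ∞) fun p : ℝ × V3 => grad3 (f p.1) p.2 j
  have h : (fun p : ℝ × V3 => grad3 (f p.1) p.2 j) = fun p => fderiv ℝ (unc f) p (eS j) := by
    funext p
    exact pdF f hf p.1 p.2 j
  rw [h]
  exact contDiff_D hf (eS j)

end Fields

lemma grad3_zero (x : V3) : grad3 (fun _ : V3 => (0:ℝ)) x = 0 := by
  funext i
  simp [grad3, pd]

lemma convD_grad (Vel : ℝ → V3 → V3) (f : ℝ → V3 → ℝ) (hV : SmoothTV Vel) (hf : SmoothT f)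
    (t : ℝ) (x : V3) :
    convD Vel (fun τ y => grad3 (f τ) y) t x = grad3 (fun y => matD Vel f t y) x := by
  have hVi : ∀ i, SmoothT (fun s y => Vel s y i) := fun i => contDiff_pi.mp hV i
  funext j
  -- rewrite the right-hand side function
  have h5 : (fun y => matD Vel f t y) = fun y =>
      fderiv ℝ (unc f) (t, y) e0 +
        (fderiv ℝ (unc f) (t, y) (eS 0) * Vel t y 0 +
          (fderiv ℝ (unc f) (t, y) (eS 1) * Vel t y 1 +
            fderiv ℝ (unc f) (t, y) (eS 2) * Vel t y 2)) := by
    funext y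
    have e1 : deriv (fun τ => f τ y) t = fderiv ℝ (unc f) (t, y) e0 := derivF f hf t y
    have e2 : ∀ i, pd i (f t) y = fderiv ℝ (unc f) (t, y) (eS i) := fun i => pdF f hf t y i
    simp only [matD, dot3, grad3, Fin.sum_univ_three, e1, e2]
    ring
  have dA : DifferentiableAt ℝ (fun y => fderiv ℝ (unc f) (t, y) e0) x := diffX_DF f hf e0 t x
  have dB : ∀ v : ℝ × V3, DifferentiableAt ℝ (fun y => fderiv ℝ (unc f) (t, y) v) x :=
    fun v => diffX_DF f hf v t x
  have dVi : ∀ i : Fin 3, DifferentiableAt ℝ (fun y => Vel t y i) x :=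
    fun i => diffX_F _ (hVi i) t x
  have dP : ∀ i : Fin 3, DifferentiableAt ℝ
      (fun y => fderiv ℝ (unc f) (t, y) (eS i) * Vel t y i) x :=
    fun i => (dB (eS i)).mul (dVi i)
  have hgr : grad3 (fun y => matD Vel f t y) x j = pd j (fun y => matD Vel f t y) x := rfl
  rw [hgr, h5, pd_add dA ((dP 0).fun_add ((dP 1).fun_add (dP 2))),
    pd_add (dP 0) ((dP 1).fun_add (dP 2)), pd_add (dP 1) (dP 2),
    pd_mul (dB (eS 0)) (dVi 0) j, pd_mul (dB (eS 1)) (dVi 1) j, pd_mul (dB (eS 2)) (dVi 2) j,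
    pdDF f hf e0 t x j,
    pdDF f hf (eS 0) t x j, pdDF f hf (eS 1) t x j, pdDF f hf (eS 2) t x j]
  have e1' : (fun τ => pd j (f τ) x) = fun τ => fderiv ℝ (unc f) (τ, x) (eS j) :=
    funext fun τ => pdF f hf τ x j
  have e3' : pd j (f t) = fun y => fderiv ℝ (unc f) (t, y) (eS j) :=
    funext fun y => pdF f hf t y j
  simp only [convD, Pi.add_apply, matDvec, matD, rowJac, grad3, dot3, Fin.sum_univ_three]
  rw [e1', derivDF f hf (eS j) t x]
  rw [show (fun y => pd j (f t) y) = fun y => fderiv ℝ (unc f) (t, y) (eS j) from e3']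
  rw [pdDF f hf (eS j) t x 0, pdDF f hf (eS j) t x 1, pdDF f hf (eS j) t x 2,
    pdF f hf t x 0, pdF f hf t x 1, pdF f hf t x 2,
    symmF f hf (t, x) e0 (eS j),
    symmF f hf (t, x) (eS 0) (eS j), symmF f hf (t, x) (eS 1) (eS j),
    symmF f hf (t, x) (eS 2) (eS j)]
  ring

lemma matD_mul (Vel : ℝ → V3 → V3) (a b : ℝ → V3 → ℝ) (ha : SmoothT a) (hb : SmoothT b)
    (t : ℝ) (x : V3) :
    matD Vel (fun τ y => a τ y * b τ y) t x
      = matD Vel a t x * b t x + a t x * matD Vel b t x := by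
  have hat : DifferentiableAt ℝ (fun τ => a τ x) t := diffT_F a ha t x
  have hbt : DifferentiableAt ℝ (fun τ => b τ x) t := diffT_F b hb t x
  have hax : DifferentiableAt ℝ (a t) x := diffX_F a ha t x
  have hbx : DifferentiableAt ℝ (b t) x := diffX_F b hb t x
  simp only [matD, dot3, grad3, Fin.sum_univ_three]
  rw [deriv_fun_mul hat hbt, pd_mul hax hbx 0, pd_mul hax hbx 1, pd_mul hax hbx 2]
  ring

lemma convD_add (Vel L M : ℝ → V3 → V3) (hL : SmoothTV L) (hM : SmoothTV M)
    (t : ℝ) (x : V3) :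
    convD Vel (fun τ y => L τ y + M τ y) t x = convD Vel L t x + convD Vel M t x := by
  funext j
  have hLj : SmoothT (fun s y => L s y j) := contDiff_pi.mp hL j
  have hMj : SmoothT (fun s y => M s y j) := contDiff_pi.mp hM j
  have dLt : DifferentiableAt ℝ (fun τ => L τ x j) t := diffT_F _ hLj t x
  have dMt : DifferentiableAt ℝ (fun τ => M τ x j) t := diffT_F _ hMj t x
  have dLx : DifferentiableAt ℝ (fun y => L t y j) x := diffX_F _ hLj t x
  have dMx : DifferentiableAt ℝ (fun y => M t y j) x := diffX_F _ hMj t x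
  simp only [convD, Pi.add_apply, matDvec, matD, rowJac, grad3, dot3, Fin.sum_univ_three]
  rw [deriv_fun_add dLt dMt, pd_add dLx dMx 0, pd_add dLx dMx 1, pd_add dLx dMx 2]
  ring

lemma convD_smul (Vel : ℝ → V3 → V3) (ψ T : ℝ → V3 → ℝ) (hψ : SmoothT ψ) (hT : SmoothT T)
    (t : ℝ) (x : V3) :
    convD Vel (fun τ y => ψ τ y • grad3 (T τ) y) t x
      = matD Vel ψ t x • grad3 (T t) x
        + ψ t x • convD Vel (fun τ y => grad3 (T τ) y) t x := by
  funext j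
  have hm := matD_mul Vel ψ (fun s y => grad3 (T s) y j) hψ (smooth_gradj T hT j) t x
  simp only [convD, Pi.add_apply, Pi.smul_apply, smul_eq_mul, matDvec, rowJac, matD, dot3,
    grad3, Fin.sum_univ_three] at hm ⊢
  linear_combination hm

end Stmt16Aux

/-- If `V = grad φ + ψ grad T + γ grad ν` with `dT/dt = 0`, `dφ/dt = ½|V|² − g − Ω`,
`dψ/dt = u`, `dγ/dt = 0`, `dν/dt = 0`, then
`d_c(V*) = grad*(½|V|² − g − Ω) + u grad* T`. -/
theorem stmt_16 (Vel : ℝ → V3 → V3) (φ ψ T γ ν u g Ω : ℝ → V3 → ℝ)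
    (hV : SmoothTV Vel) (hφ : SmoothT φ) (hψ : SmoothT ψ) (hT : SmoothT T)
    (hγ : SmoothT γ) (hν : SmoothT ν) (hu : SmoothT u) (hg : SmoothT g) (hΩ : SmoothT Ω)
    (hrep : ∀ (t : ℝ) (x : V3),
      Vel t x = grad3 (φ t) x + ψ t x • grad3 (T t) x + γ t x • grad3 (ν t) x)
    (hTd : ∀ (t : ℝ) (x : V3), matD Vel T t x = 0)
    (hφd : ∀ (t : ℝ) (x : V3),
      matD Vel φ t x = (1 / 2) * dot3 (Vel t x) (Vel t x) - g t x - Ω t x)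
    (hψd : ∀ (t : ℝ) (x : V3), matD Vel ψ t x = u t x)
    (hγd : ∀ (t : ℝ) (x : V3), matD Vel γ t x = 0)
    (hνd : ∀ (t : ℝ) (x : V3), matD Vel ν t x = 0) :
    ∀ (t : ℝ) (x : V3),
      convD Vel Vel t x
        = grad3 (fun y => (1 / 2) * dot3 (Vel t y) (Vel t y) - g t y - Ω t y) x
          + u t x • grad3 (T t) x := by
  intro t x
  have hL1 : SmoothTV (fun τ y => grad3 (φ τ) y) :=
    contDiff_pi.mpr fun j => Stmt16Aux.smooth_gradj φ hφ j
  have hL2 : SmoothTV (fun τ y => ψ τ y • grad3 (T τ) y) := by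
    refine contDiff_pi.mpr fun j => ?_
    exact ContDiff.mul hψ (Stmt16Aux.smooth_gradj T hT j)
  have hL3 : SmoothTV (fun τ y => γ τ y • grad3 (ν τ) y) := by
    refine contDiff_pi.mpr fun j => ?_
    exact ContDiff.mul hγ (Stmt16Aux.smooth_gradj ν hν j)
  have hL12 : SmoothTV (fun τ y => grad3 (φ τ) y + ψ τ y • grad3 (T τ) y) := hL1.add hL2
  have hVL : Vel = fun τ y =>
      grad3 (φ τ) y + ψ τ y • grad3 (T τ) y + γ τ y • grad3 (ν τ) y :=
    funext fun τ => funext fun y => hrep τ y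
  have h1 : convD Vel Vel t x
      = convD Vel (fun τ y =>
          grad3 (φ τ) y + ψ τ y • grad3 (T τ) y + γ τ y • grad3 (ν τ) y) t x :=
    congrArg (fun L => convD Vel L t x) hVL
  have h2 := Stmt16Aux.convD_add Vel
    (fun τ y => grad3 (φ τ) y + ψ τ y • grad3 (T τ) y)
    (fun τ y => γ τ y • grad3 (ν τ) y) hL12 hL3 t x
  have h3 := Stmt16Aux.convD_add Vel
    (fun τ y => grad3 (φ τ) y) (fun τ y => ψ τ y • grad3 (T τ) y) hL1 hL2 t x
  rw [h1, h2, h3, Stmt16Aux.convD_smul Vel ψ T hψ hT t x,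
    Stmt16Aux.convD_smul Vel γ ν hγ hν t x,
    Stmt16Aux.convD_grad Vel φ hV hφ t x,
    Stmt16Aux.convD_grad Vel T hV hT t x,
    Stmt16Aux.convD_grad Vel ν hV hν t x]
  have gφ : (fun y => matD Vel φ t y)
      = fun y => (1 / 2) * dot3 (Vel t y) (Vel t y) - g t y - Ω t y :=
    funext fun y => hφd t y
  have gT : (fun y => matD Vel T t y) = fun _ => (0:ℝ) := funext fun y => hTd t y
  have gν : (fun y => matD Vel ν t y) = fun _ => (0:ℝ) := funext fun y => hνd t y
  rw [gφ, gT, gν, Stmt16Aux.grad3_zero, hψd t x, hγd t x]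
  simp
end
end
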